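/- arXiv:1909.09362 — 7 statements merged into one kernel-verified Lean document; each statement's English description precedes it below -/
import Mathlib

section
/- For every bit vector a ∈ {0,1}ⁿ, every integer k with 1 ≤ k ≤ n, and every coordinate index i with 1 ≤ i ≤ k, the image of the chain region R_{a,k} under the projection onto the i-th coordinate is exactly the open interval ( ∑_{j=1}^{i} a_j s_j − i/(2n) , ∑_{j=1}^{i} a_j s_j + i/(2n) ). -/
open MeasureTheory
open scoped ENNReal

noncomputable section

/-- The chain region `R_{a,k} ⊆ ℝᵏ` : the set of points `(x₁,…,x_k)` with
`a₁s₁ − 1/(2n) < x₁ < a₁s₁ + 1/(2n)` and, for `2 ≤ i ≤ k`,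
`x_{i−1} + a_i s_i − 1/(2n) < x_i < x_{i−1} + a_i s_i + 1/(2n)`
(indices here are 0-based). -/
def chainRegion (n k : ℕ) (hk : k ≤ n) (s : Fin n → ℕ) (a : Fin n → Bool) :
    Set (Fin k → ℝ) :=
  {x | ∀ i : Fin k,
    (if 0 < (i : ℕ) then x ⟨(i : ℕ) - 1, Nat.lt_of_le_of_lt (Nat.sub_le _ _) i.isLt⟩ else 0) +
        (if a (Fin.castLE hk i) then (s (Fin.castLE hk i) : ℝ) else 0) - 1 / (2 * (n : ℝ))
      < x i ∧
    x i <
      (if 0 < (i : ℕ) then x ⟨(i : ℕ) - 1, Nat.lt_of_le_of_lt (Nat.sub_le _ _) i.isLt⟩ else 0) +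
        (if a (Fin.castLE hk i) then (s (Fin.castLE hk i) : ℝ) else 0) + 1 / (2 * (n : ℝ))}

/-!
The increments `x_i - x_{i-1}` (with `x_0 = 0`) of a point of the chain region range
independently over open intervals of radius `1/(2n)` around `a_i s_i`, and `x_i` is the sum of
the first `i` of them; so `x_i` lies within `i/(2n)` of `∑_{j ≤ i} a_j s_j`. Conversely, shifting
each of the first `i` increments by the same `t` with `|t| < 1/(2n)` attains every such value.
-/

open Finset

namespace Fin

variable {M : Type*} [AddCommGroup M] {k : ℕ}

def increment (x : Fin k → M) (i : Fin k) : M :=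
  x i - (Fin.cons 0 x : Fin (k + 1) → M) i.castSucc

theorem cons_zero_castSucc (x : Fin k → M) (i : Fin k) :
    (Fin.cons 0 x : Fin (k + 1) → M) i.castSucc =
      if 0 < (i : ℕ) then x ⟨(i : ℕ) - 1, Nat.lt_of_le_of_lt (Nat.sub_le _ _) i.isLt⟩ else 0 := by
  obtain ⟨_ | m, hm⟩ := i
  · simp
  · exact Fin.cons_succ (α := fun _ => M) 0 x ⟨m, by omega⟩

theorem sum_Iic_increment (x : Fin k → M) (i : Fin k) : ∑ j ∈ Iic i, increment x j = x i := by
  simpa [increment] using Fin.sum_Iic_sub i (Fin.cons 0 x : Fin (k + 1) → M)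

theorem increment_partialSum_succ (d : Fin k → M) :
    increment (fun i => partialSum d i.succ) = d := by
  have hcons : (Fin.cons 0 fun i => partialSum d i.succ : Fin (k + 1) → M) = partialSum d := by
    ext i
    cases i using Fin.cases <;> simp
  ext i
  rw [increment, hcons, partialSum_succ, add_sub_cancel_left]

theorem sum_Iic_add_const (c : Fin k → ℝ) (i : Fin k) (t : ℝ) :
    ∑ j ∈ Iic i, (c j + t) = ∑ j ∈ Iic i, c j + ((i : ℕ) + 1) * t := by
  simp [sum_add_distrib, card_Iic]

end Fin

def incrementBox {k : ℕ} (c : Fin k → ℝ) (ε : ℝ) : Set (Fin k → ℝ) :=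
  {x | ∀ j, Fin.increment x j ∈ Set.Ioo (c j - ε) (c j + ε)}

section incrementBox

variable {k : ℕ} {c : Fin k → ℝ} {ε : ℝ}

theorem apply_mem_Ioo_of_mem_incrementBox {x : Fin k → ℝ} (hx : x ∈ incrementBox c ε)
    (i : Fin k) :
    x i ∈ Set.Ioo (∑ j ∈ Iic i, c j - ((i : ℕ) + 1) * ε)
      (∑ j ∈ Iic i, c j + ((i : ℕ) + 1) * ε) := by
  rw [← Fin.sum_Iic_increment x i, sub_eq_add_neg, ← mul_neg, ← Fin.sum_Iic_add_const,
    ← Fin.sum_Iic_add_const]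
  exact ⟨sum_lt_sum_of_nonempty nonempty_Iic fun j _ => (hx j).1,
    sum_lt_sum_of_nonempty nonempty_Iic fun j _ => (hx j).2⟩

theorem exists_mem_incrementBox_apply_eq {i : Fin k} {y : ℝ}
    (hy : y ∈ Set.Ioo (∑ j ∈ Iic i, c j - ((i : ℕ) + 1) * ε)
      (∑ j ∈ Iic i, c j + ((i : ℕ) + 1) * ε)) :
    ∃ x ∈ incrementBox c ε, x i = y := by
  set t := (y - ∑ j ∈ Iic i, c j) / ((i : ℕ) + 1)
  have hy_eq : y = ∑ j ∈ Iic i, c j + ((i : ℕ) + 1) * t := by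
    rw [mul_div_cancel₀ _ (by positivity)]
    ring
  have ht : t ∈ Set.Ioo (-ε) ε := by
    rw [hy_eq] at hy
    obtain ⟨h1, h2⟩ := hy
    constructor <;> nlinarith
  set d : Fin k → ℝ := fun j => c j + if j ≤ i then t else 0
  refine ⟨fun j => Fin.partialSum d j.succ, fun j => ?_, ?_⟩
  · rw [Fin.increment_partialSum_succ]
    simp only [d, Set.mem_Ioo]
    split_ifs <;> constructor <;> linarith [ht.1, ht.2]
  · calc Fin.partialSum d i.succ = ∑ j ∈ Iic i, d j := by
          simpa only [Fin.increment_partialSum_succ] using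
            (Fin.sum_Iic_increment (fun j => Fin.partialSum d j.succ) i).symm
      _ = ∑ j ∈ Iic i, (c j + t) := sum_congr rfl fun j hj => by simp [d, mem_Iic.1 hj]
      _ = y := by rw [Fin.sum_Iic_add_const, hy_eq]

theorem image_apply_incrementBox (i : Fin k) :
    (fun x : Fin k → ℝ => x i) '' incrementBox c ε =
      Set.Ioo (∑ j ∈ Iic i, c j - ((i : ℕ) + 1) * ε) (∑ j ∈ Iic i, c j + ((i : ℕ) + 1) * ε) := by
  ext y
  constructor
  · rintro ⟨x, hx, rfl⟩
    exact apply_mem_Ioo_of_mem_incrementBox hx i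
  · exact exists_mem_incrementBox_apply_eq

end incrementBox

theorem chainRegion_eq_incrementBox (n k : ℕ) (hk : k ≤ n) (s : Fin n → ℕ) (a : Fin n → Bool) :
    chainRegion n k hk s a =
      incrementBox (fun j => if a (Fin.castLE hk j) then (s (Fin.castLE hk j) : ℝ) else 0)
        (1 / (2 * (n : ℝ))) := by
  ext x
  simp only [chainRegion, incrementBox, Fin.increment, Fin.cons_zero_castSucc, Set.mem_ofPred_eq,
    Set.mem_Ioo]
  refine forall_congr' fun j => and_congr ?_ ?_ <;> constructor <;> intro h <;> linarith

theorem chainRegion_proj_general (n : ℕ) (s : Fin n → ℕ)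
    (a : Fin n → Bool) (k : ℕ) (hk : k ≤ n) (i : Fin k) :
    (fun x : Fin k → ℝ => x i) '' chainRegion n k hk s a =
      Set.Ioo
        ((∑ j ∈ Finset.Iic i, if a (Fin.castLE hk j) then (s (Fin.castLE hk j) : ℝ) else 0)
          - ((i : ℕ) + 1) / (2 * (n : ℝ)))
        ((∑ j ∈ Finset.Iic i, if a (Fin.castLE hk j) then (s (Fin.castLE hk j) : ℝ) else 0)
          + ((i : ℕ) + 1) / (2 * (n : ℝ))) := by
  rw [chainRegion_eq_incrementBox, image_apply_incrementBox, mul_one_div]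

/-- for every bit vector `a ∈ {0,1}ⁿ`, every `1 ≤ k ≤ n` and every coordinate
`i` (0-based index, so the paper's `i`-th coordinate with radius `i/(2n)` becomes radius
`((i:ℕ)+1)/(2n)` here), the image of the chain region `R_{a,k}` under the projection onto
the `i`-th coordinate is exactly the open interval
`(∑_{j ≤ i} a_j s_j − (i+1)/(2n), ∑_{j ≤ i} a_j s_j + (i+1)/(2n))`. -/
theorem chainRegion_proj (n : ℕ) (hn : 0 < n) (s : Fin n → ℕ) (hs : ∀ i, 0 < s i)
    (a : Fin n → Bool) (k : ℕ) (hk1 : 1 ≤ k) (hk : k ≤ n) (i : Fin k) :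
    (fun x : Fin k → ℝ => x i) '' chainRegion n k hk s a =
      Set.Ioo
        ((∑ j ∈ Finset.Iic i, if a (Fin.castLE hk j) then (s (Fin.castLE hk j) : ℝ) else 0)
          - ((i : ℕ) + 1) / (2 * (n : ℝ)))
        ((∑ j ∈ Finset.Iic i, if a (Fin.castLE hk j) then (s (Fin.castLE hk j) : ℝ) else 0)
          + ((i : ℕ) + 1) / (2 * (n : ℝ))) :=
  chainRegion_proj_general n s a k hk i
end
end

section
/- Let L be a positive integer and let Q = {x ∈ ℝⁿ : L − 1/2 < x_n < L + 1/2}. For every bit vector a ∈ {0,1}ⁿ: if S(a) ≠ L then the n-dimensional Lebesgue volume of R_{a,n} ∩ Q equals 0, and if S(a) = L then the n-dimensional Lebesgue volume of R_{a,n} ∩ Q equals (1/n)ⁿ (equivalently, R_{a,n} ⊆ Q in that case). -/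
/-!
The difference map `x ↦ (x i - x (i - 1))ᵢ` (with `x (-1) = 0`) is lower unitriangular, hence
preserves Lebesgue measure, and it carries `R_{a,n}` onto the sup-norm ball of radius `1/(2n)`
around `(aᵢ sᵢ)ᵢ`; so `R_{a,n}` has volume `(1/n)ⁿ`. Summing the `n` differences, the last
coordinate of a point of `R_{a,n}` lies within `n · 1/(2n) = 1/2` of `S(a)`. Hence `R_{a,n} ⊆ Q`
when `S(a) = L`, while `R_{a,n}` misses `Q` when the integer `S(a)` differs from `L`.
-/

open MeasureTheory
open scoped ENNReal

noncomputable section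

open Finset Metric

section CommRing

variable {R : Type*} [CommRing R] {n : ℕ}

def prevCoord (x : Fin n → R) (i : Fin n) : R :=
  if 0 < (i : ℕ) then x ⟨(i : ℕ) - 1, by omega⟩ else 0

def finDiff : (Fin n → R) →ₗ[R] (Fin n → R) where
  toFun x i := x i - prevCoord x i
  map_add' x y := by
    ext i
    simp only [prevCoord, Pi.add_apply]
    split_ifs <;> ring
  map_smul' c x := by
    ext i
    simp only [prevCoord, Pi.smul_apply, smul_eq_mul, RingHom.id_apply]
    split_ifs <;> ring

lemma finDiff_apply (x : Fin n → R) (i : Fin n) : finDiff x i = x i - prevCoord x i := rfl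

lemma det_finDiff : LinearMap.det (finDiff : (Fin n → R) →ₗ[R] (Fin n → R)) = 1 := by
  rw [← LinearMap.det_toMatrix', Matrix.det_of_isLowerTriangular]
  · refine Finset.prod_eq_one fun i _ => ?_
    simp [finDiff_apply, prevCoord, Pi.single_apply, Fin.ext_iff]
    omega
  · intro i j hij
    simp only [OrderDual.toDual_lt_toDual] at hij
    have hne : (i : ℕ) ≠ j := by omega
    have hne' : (i : ℕ) - 1 ≠ j := by omega
    simp [finDiff_apply, prevCoord, Fin.ext_iff, hne, hne']

lemma sum_finDiff_apply (hn : 0 < n) (x : Fin n → R) :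
    ∑ i, finDiff x i = x ⟨n - 1, by omega⟩ := by
  let g : ℕ → R := fun j => if h : 0 < j ∧ j ≤ n then x ⟨j - 1, by omega⟩ else 0
  have hg : ∀ i : Fin n, finDiff x i = g (i + 1) - g i := by
    intro i
    by_cases hi : 0 < (i : ℕ)
    · simp [finDiff_apply, prevCoord, g, hi, i.isLt, i.isLt.le]
    · simp [finDiff_apply, prevCoord, g, hi, i.isLt]
  rw [Fintype.sum_congr _ _ hg, Fin.sum_univ_eq_sum_range (fun j => g (j + 1) - g j),
    Finset.sum_range_sub]
  simp [g, hn]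

end CommRing

section Real

variable {n : ℕ}

lemma volume_preimage_finDiff (t : Set (Fin n → ℝ)) : volume (finDiff ⁻¹' t) = volume t := by
  rw [Measure.addHaar_preimage_linearMap volume (by simp [det_finDiff]), det_finDiff]
  simp

lemma abs_sub_sum_lt_of_finDiff_mem_ball (hn : 0 < n) {x b : Fin n → ℝ} {r : ℝ}
    (hx : finDiff x ∈ ball b r) : |x ⟨n - 1, by omega⟩ - ∑ i, b i| < n * r := by
  rw [← sum_finDiff_apply hn x, ← Finset.sum_sub_distrib]
  calc |∑ i, (finDiff x i - b i)| ≤ ∑ i, |finDiff x i - b i| := abs_sum_le_sum_abs _ _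
    _ < ∑ _i : Fin n, r := sum_lt_sum_of_nonempty (univ_nonempty_iff.2 ⟨⟨0, hn⟩⟩)
        fun i _ => (dist_le_pi_dist _ _ i).trans_lt hx
    _ = n * r := by simp

def chainIncrements (s : Fin n → ℕ) (a : Fin n → Bool) (i : Fin n) : ℝ :=
  if a i then (s i : ℝ) else 0

lemma chainRegion_eq_preimage_ball (hn : 0 < n) (s : Fin n → ℕ) (a : Fin n → Bool) :
    chainRegion n n le_rfl s a = finDiff ⁻¹' ball (chainIncrements s a) (1 / (2 * n)) := by
  ext x
  simp only [chainRegion, Set.mem_ofPred_eq, Set.mem_preimage, mem_ball,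
    dist_pi_lt_iff (by positivity : (0 : ℝ) < 1 / (2 * n)), Real.dist_eq, abs_sub_lt_iff,
    finDiff_apply, prevCoord, chainIncrements, Fin.castLE_refl]
  refine forall_congr' fun i => ?_
  constructor <;> rintro ⟨h₁, h₂⟩ <;> constructor <;> linarith

lemma volume_chainRegion (hn : 0 < n) (s : Fin n → ℕ) (a : Fin n → Bool) :
    volume (chainRegion n n le_rfl s a) = (1 / (n : ℝ≥0∞)) ^ n := by
  rw [chainRegion_eq_preimage_ball hn, volume_preimage_finDiff,
    Real.volume_pi_ball _ (by positivity), Fintype.card_fin,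
    show 2 * (1 / (2 * n)) = (n : ℝ)⁻¹ by field_simp, ENNReal.ofReal_pow (by positivity),
    ENNReal.ofReal_inv_of_pos (by positivity), ENNReal.ofReal_natCast, one_div]

lemma abs_last_sub_lt_half (hn : 0 < n) (s : Fin n → ℕ) (a : Fin n → Bool) {x : Fin n → ℝ}
    (hx : x ∈ chainRegion n n le_rfl s a) :
    |x ⟨n - 1, by omega⟩ - ((∑ i, if a i then s i else 0 : ℕ) : ℝ)| < 1 / 2 := by
  rw [chainRegion_eq_preimage_ball hn] at hx
  convert abs_sub_sum_lt_of_finDiff_mem_ball hn hx using 2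
  · push_cast [chainIncrements, Nat.cast_ite]; rfl
  · field_simp

end Real

theorem chainRegion_query_general (n : ℕ) (hn : 0 < n) (s : Fin n → ℕ)
    (a : Fin n → Bool) (L : ℕ) :
    let Q : Set (Fin n → ℝ) :=
      {x | (L : ℝ) - 1 / 2 < x ⟨n - 1, Nat.sub_lt hn one_pos⟩ ∧
           x ⟨n - 1, Nat.sub_lt hn one_pos⟩ < (L : ℝ) + 1 / 2}
    ((∑ i : Fin n, if a i then s i else 0) ≠ L →
        volume (chainRegion n n le_rfl s a ∩ Q) = 0) ∧
    ((∑ i : Fin n, if a i then s i else 0) = L →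
        chainRegion n n le_rfl s a ⊆ Q ∧
        volume (chainRegion n n le_rfl s a ∩ Q) = (1 / (n : ℝ≥0∞)) ^ n) := by
  intro Q
  set S := ∑ i : Fin n, if a i then s i else 0
  refine ⟨fun hSL => ?_, fun hSL => ?_⟩
  · suffices chainRegion n n le_rfl s a ∩ Q = ∅ by simp [this]
    refine Set.eq_empty_of_forall_notMem fun x ⟨hx, hQ⟩ => hSL ?_
    have hS : |x ⟨n - 1, _⟩ - (S : ℝ)| < 1 / 2 := abs_last_sub_lt_half hn s a hx
    rw [abs_sub_lt_iff] at hS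
    have hSL₁ : S < L + 1 := by exact_mod_cast (by linarith [hQ.2] : (S : ℝ) < L + 1)
    have hSL₂ : L < S + 1 := by exact_mod_cast (by linarith [hQ.1] : (L : ℝ) < S + 1)
    omega
  · have hsub : chainRegion n n le_rfl s a ⊆ Q := fun x hx => by
      have hS : |x ⟨n - 1, _⟩ - (S : ℝ)| < 1 / 2 := abs_last_sub_lt_half hn s a hx
      rw [hSL, abs_sub_lt_iff] at hS
      exact ⟨by linarith, by linarith⟩
    exact ⟨hsub, by rw [Set.inter_eq_left.2 hsub, volume_chainRegion hn]⟩

/-- let `L` be a positive integer and `Q = {x ∈ ℝⁿ : L − 1/2 < x_n < L + 1/2}`.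
For every bit vector `a ∈ {0,1}ⁿ` : if `S(a) ≠ L` then `volume (R_{a,n} ∩ Q) = 0`, and if
`S(a) = L` then `volume (R_{a,n} ∩ Q) = (1/n)ⁿ` (indeed `R_{a,n} ⊆ Q` in that case). -/
theorem chainRegion_query (n : ℕ) (hn : 0 < n) (s : Fin n → ℕ) (hs : ∀ i, 0 < s i)
    (a : Fin n → Bool) (L : ℕ) (hL : 0 < L) :
    let Q : Set (Fin n → ℝ) :=
      {x | (L : ℝ) - 1 / 2 < x ⟨n - 1, Nat.sub_lt hn one_pos⟩ ∧
           x ⟨n - 1, Nat.sub_lt hn one_pos⟩ < (L : ℝ) + 1 / 2}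
    ((∑ i : Fin n, if a i then s i else 0) ≠ L →
        volume (chainRegion n n le_rfl s a ∩ Q) = 0) ∧
    ((∑ i : Fin n, if a i then s i else 0) = L →
        chainRegion n n le_rfl s a ⊆ Q ∧
        volume (chainRegion n n le_rfl s a ∩ Q) = (1 / (n : ℝ≥0∞)) ^ n) :=
  chainRegion_query_general n hn s a L
end
end

section
/- For any two distinct bit vectors a, a′ ∈ {0,1}ⁿ, the chain regions R_{a,n} and R_{a′,n} are disjoint. -/
open MeasureTheory
open scoped ENNReal

noncomputable section

/-- for any two distinct bit vectors `a, a′ ∈ {0,1}ⁿ`, the chain regions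
`R_{a,n}` and `R_{a′,n}` are disjoint. -/
theorem chainRegion_disjoint (n : ℕ) (hn : 0 < n) (s : Fin n → ℕ) (hs : ∀ i, 0 < s i)
    (a a' : Fin n → Bool) (hne : a ≠ a') :
    Disjoint (chainRegion n n le_rfl s a) (chainRegion n n le_rfl s a') := by
  rw [Set.disjoint_left]
  intro x hx hx'
  obtain ⟨i, hi⟩ := Function.ne_iff.mp hne
  have h1 := hx i
  have h2 := hx' i
  set p : ℝ := (if 0 < (i : ℕ) then
      x ⟨(i : ℕ) - 1, Nat.lt_of_le_of_lt (Nat.sub_le _ _) i.isLt⟩ else 0) with hp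
  have hcast : Fin.castLE le_rfl i = i := rfl
  rw [hcast] at h1 h2
  have hs1 : (1 : ℝ) ≤ s i := by exact_mod_cast hs i
  have hn1 : (1 : ℝ) ≤ n := by exact_mod_cast hn
  have hhalf : 1 / (2 * (n : ℝ)) ≤ 1 / 2 := by
    apply div_le_div_of_nonneg_left (by norm_num) (by norm_num) (by linarith)
  cases ha : a i <;> cases ha' : a' i <;> rw [ha, ha'] at hi <;> simp_all <;>
    · have hs1' : (1 : ℝ) ≤ (s i : ℝ) := by exact_mod_cast hs1
      have hinv : (n : ℝ)⁻¹ ≤ 1 := by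
        rw [inv_le_one_iff₀]; right; exact_mod_cast hn1
      linarith [h1.1, h1.2, h2.1, h2.2]
end
end

section
/- For every bit vector a ∈ {0,1}ⁿ and every node m ∈ {1,…,2n−1}, letting Leaves(m) be the set of leaf descendants of m in the heap-indexed binary tree and d = |Leaves(m)|, the image of T_a under the projection onto the m-th coordinate is exactly the open interval centered at ∑_{ℓ ∈ Leaves(m)} a_{ℓ−n+1} s_{ℓ−n+1} of radius (2d − 1)/(4n). In particular, taking m = 1 (the root, with d = n), the projection is the open interval (S(a) − (2n−1)/(4n), S(a) + (2n−1)/(4n)), which is contained in (S(a) − 1/2, S(a) + 1/2). -/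
open MeasureTheory
open scoped ENNReal

noncomputable section

/-- The value `a_{m−n+1} s_{m−n+1}` carried by a leaf of the heap-indexed binary tree
(0-based: index `j` is a leaf when `n − 1 ≤ j`, carrying `s_{j−(n−1)}`); the value is `0`
on internal nodes. -/
def leafWeight (n : ℕ) (s : Fin n → ℕ) (a : Fin n → Bool) (j : Fin (2 * n - 1)) : ℝ :=
  if _ : n - 1 ≤ (j : ℕ) then
    (if a ⟨(j : ℕ) - (n - 1), by have := j.isLt; omega⟩ then
      (s ⟨(j : ℕ) - (n - 1), by have := j.isLt; omega⟩ : ℝ) else 0)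
  else 0

/-- The tree region `T_a ⊆ ℝ^{2n−1}` : coordinates are indexed in heap order (0-based:
node `j` is internal when `j < n − 1`, with children `2j+1` and `2j+2`; the nodes
`n − 1 ≤ j` are leaves). A point `x` lies in `T_a` iff for every leaf `j`,
`a_j s_j − 1/(4n) < x_j < a_j s_j + 1/(4n)`, and for every internal node `j`,
`x_{2j+1} + x_{2j+2} − 1/(4n) < x_j < x_{2j+1} + x_{2j+2} + 1/(4n)`. -/
def treeRegion (n : ℕ) (s : Fin n → ℕ) (a : Fin n → Bool) : Set (Fin (2 * n - 1) → ℝ) :=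
  {x | (∀ j : Fin (2 * n - 1), n - 1 ≤ (j : ℕ) →
          (leafWeight n s a j - 1 / (4 * (n : ℝ)) < x j ∧
           x j < leafWeight n s a j + 1 / (4 * (n : ℝ)))) ∧
       (∀ j : Fin (2 * n - 1), ∀ h : (j : ℕ) < n - 1,
          (x ⟨2 * (j : ℕ) + 1, by omega⟩ + x ⟨2 * (j : ℕ) + 2, by omega⟩ - 1 / (4 * (n : ℝ))
              < x j ∧
           x j < x ⟨2 * (j : ℕ) + 1, by omega⟩ + x ⟨2 * (j : ℕ) + 2, by omega⟩
              + 1 / (4 * (n : ℝ))))}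

/-!
Let the slack of `x` at a node be `x_j` minus the sum of the two child coordinates (minus the
leaf weight, at a leaf). Unwinding this recursion gives `x_j = ∑_{ℓ ∈ subtree j} (w_ℓ + slack_ℓ)`,
and conversely any family of slacks defines a point in this way. Hence `T_a` is the image of the
open cube `|δ_ℓ| < 1/(4n)` under an affine bijection, and `x_j` ranges over the leaf sum below `j`
plus a sum of `|subtree j|` independent errors in `(-1/(4n), 1/(4n))`: an open interval of radius
`|subtree j|/(4n)`. Every internal node of the heap has two children, so `|subtree j| = 2d - 1`.
-/

namespace Nat

theorem exists_div_two_pow_eq_iff {L M : ℕ} :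
    (∃ t, L / 2 ^ t = M) ↔ L = M ∨ (∃ t, L / 2 ^ t = 2 * M) ∨ ∃ t, L / 2 ^ t = 2 * M + 1 := by
  constructor
  · rintro ⟨_ | t, ht⟩
    · simp_all
    · rw [pow_succ, ← Nat.div_div_eq_div_mul] at ht
      have : L / 2 ^ t = 2 * M ∨ L / 2 ^ t = 2 * M + 1 := by omega
      exact Or.inr (this.imp (⟨t, ·⟩) (⟨t, ·⟩))
  · rintro (rfl | ⟨t, ht⟩ | ⟨t, ht⟩)
    · exact ⟨0, by simp⟩
    all_goals exact ⟨t + 1, by rw [pow_succ, ← Nat.div_div_eq_div_mul, ht]; omega⟩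

theorem eq_of_div_two_pow_eq {L a b : ℕ} (hpos : 0 < L / 2 ^ a) (h : L / 2 ^ a = L / 2 ^ b) :
    a = b := by
  have key : ∀ {a b}, 0 < L / 2 ^ a → a < b → L / 2 ^ b < L / 2 ^ a := fun {a b} hpos hab => by
    rw [show b = a + (b - a) by omega, pow_add, ← Nat.div_div_eq_div_mul]
    exact Nat.div_lt_self hpos (Nat.one_lt_two_pow (by omega))
  rcases lt_trichotomy a b with hab | rfl | hab
  · exact absurd h (key hpos hab).ne'
  · rfl
  · exact absurd h (key (h ▸ hpos) hab).ne

theorem exists_div_two_pow_eq_one {L : ℕ} (hL : 0 < L) : ∃ t, L / 2 ^ t = 1 :=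
  ⟨Nat.log 2 L, Nat.div_eq_of_lt_le (by simpa using Nat.pow_log_le_self 2 hL.ne')
    (by simpa [pow_succ, mul_comm] using Nat.lt_pow_succ_log_self one_lt_two L)⟩

end Nat

theorem Finset.image_sum_of_forall_abs_lt {ι : Type*} {S : Finset ι} (hS : S.Nonempty) (r : ℝ) :
    (fun δ : ι → ℝ => ∑ i ∈ S, δ i) '' {δ | ∀ i, |δ i| < r} =
      Set.Ioo (-(S.card * r)) (S.card * r) := by
  ext y
  rw [Set.mem_Ioo, ← abs_lt]
  constructor
  · rintro ⟨δ, hδ, rfl⟩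
    calc |∑ i ∈ S, δ i| ≤ ∑ i ∈ S, |δ i| := Finset.abs_sum_le_sum_abs _ _
      _ < ∑ _ ∈ S, r := Finset.sum_lt_sum_of_nonempty hS fun i _ => hδ i
      _ = S.card * r := by simp
  · intro hy
    have hcard : (0 : ℝ) < S.card := by exact_mod_cast hS.card_pos
    refine ⟨fun _ => y / S.card, fun _ => ?_, ?_⟩
    · rwa [abs_div, abs_of_pos hcard, div_lt_iff₀ hcard, mul_comm]
    · simp [field]

section HeapTree

variable {n : ℕ}

def heapLeft (j : Fin (2 * n - 1)) (hj : (j : ℕ) < n - 1) : Fin (2 * n - 1) :=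
  ⟨2 * (j : ℕ) + 1, by omega⟩

def heapRight (j : Fin (2 * n - 1)) (hj : (j : ℕ) < n - 1) : Fin (2 * n - 1) :=
  ⟨2 * (j : ℕ) + 2, by omega⟩

open Classical in
def heapSubtree (j : Fin (2 * n - 1)) : Finset (Fin (2 * n - 1)) :=
  Finset.univ.filter fun ℓ => ∃ t, ((ℓ : ℕ) + 1) / 2 ^ t = (j : ℕ) + 1

theorem mem_heapSubtree {j ℓ : Fin (2 * n - 1)} :
    ℓ ∈ heapSubtree j ↔ ∃ t, ((ℓ : ℕ) + 1) / 2 ^ t = (j : ℕ) + 1 := by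
  simp [heapSubtree]

theorem self_mem_heapSubtree (j : Fin (2 * n - 1)) : j ∈ heapSubtree j :=
  mem_heapSubtree.2 ⟨0, by simp⟩

theorem heapSubtree_root (h : 0 < 2 * n - 1) : heapSubtree (⟨0, h⟩ : Fin (2 * n - 1)) = .univ :=
  Finset.eq_univ_of_forall fun _ => mem_heapSubtree.2 (Nat.exists_div_two_pow_eq_one (by omega))

theorem heapSubtree_of_le {j : Fin (2 * n - 1)} (hj : n - 1 ≤ (j : ℕ)) : heapSubtree j = {j} := by
  ext ℓ
  rw [mem_heapSubtree, Nat.exists_div_two_pow_eq_iff, Finset.mem_singleton, Fin.ext_iff]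
  have := ℓ.isLt
  have : ∀ t, ((ℓ : ℕ) + 1) / 2 ^ t ≤ (ℓ : ℕ) + 1 := fun t => Nat.div_le_self _ _
  constructor
  · rintro (h | ⟨t, ht⟩ | ⟨t, ht⟩)
    · omega
    all_goals have := this t; omega
  · intro h; exact Or.inl (by omega)

theorem heapSubtree_eq_insert {j : Fin (2 * n - 1)} (hj : (j : ℕ) < n - 1) :
    heapSubtree j = insert j (heapSubtree (heapLeft j hj) ∪ heapSubtree (heapRight j hj)) := by
  ext ℓ
  simp only [Finset.mem_insert, Finset.mem_union, mem_heapSubtree, Fin.ext_iff, heapLeft,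
    heapRight, Nat.exists_div_two_pow_eq_iff (M := (j : ℕ) + 1)]
  rw [Nat.add_right_cancel_iff, mul_add, mul_one]

theorem notMem_heapSubtree_heapLeft_union_heapRight {j : Fin (2 * n - 1)} (hj : (j : ℕ) < n - 1) :
    j ∉ heapSubtree (heapLeft j hj) ∪ heapSubtree (heapRight j hj) := by
  simp only [Finset.mem_union, mem_heapSubtree, heapLeft, heapRight, not_or]
  have := fun t => Nat.div_le_self ((j : ℕ) + 1) (2 ^ t)
  constructor <;> rintro ⟨t, ht⟩ <;> have := this t <;> omega

theorem disjoint_heapSubtree_heapLeft_heapRight {j : Fin (2 * n - 1)} (hj : (j : ℕ) < n - 1) :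
    Disjoint (heapSubtree (heapLeft j hj)) (heapSubtree (heapRight j hj)) := by
  rw [Finset.disjoint_left]
  rintro ℓ h₁ h₂
  obtain ⟨t, ht⟩ := mem_heapSubtree.1 h₁
  obtain ⟨u, hu⟩ := mem_heapSubtree.1 h₂
  simp only [heapLeft, heapRight] at ht hu
  -- `j` is then an ancestor of `ℓ` at depths `t + 1` and `u + 1`, and that depth is unique.
  have ht' : ((ℓ : ℕ) + 1) / 2 ^ (t + 1) = (j : ℕ) + 1 := by
    rw [pow_succ, ← Nat.div_div_eq_div_mul, ht]; omega
  have hu' : ((ℓ : ℕ) + 1) / 2 ^ (u + 1) = (j : ℕ) + 1 := by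
    rw [pow_succ, ← Nat.div_div_eq_div_mul, hu]; omega
  obtain rfl : t = u := by
    have := Nat.eq_of_div_two_pow_eq (by omega) (ht'.trans hu'.symm); omega
  omega

theorem sum_heapSubtree_of_lt {M : Type*} [AddCommMonoid M] (f : Fin (2 * n - 1) → M)
    {j : Fin (2 * n - 1)} (hj : (j : ℕ) < n - 1) :
    ∑ ℓ ∈ heapSubtree j, f ℓ = f j + ∑ ℓ ∈ heapSubtree (heapLeft j hj), f ℓ
      + ∑ ℓ ∈ heapSubtree (heapRight j hj), f ℓ := by
  rw [heapSubtree_eq_insert hj, Finset.sum_insert (notMem_heapSubtree_heapLeft_union_heapRight hj),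
    Finset.sum_union (disjoint_heapSubtree_heapLeft_heapRight hj), add_assoc]

def heapLeaves (j : Fin (2 * n - 1)) : Finset (Fin (2 * n - 1)) :=
  (heapSubtree j).filter fun ℓ => n - 1 ≤ (ℓ : ℕ)

theorem card_heapSubtree_add_one (j : Fin (2 * n - 1)) :
    (heapSubtree j).card + 1 = 2 * (heapLeaves j).card := by
  by_cases hj : (j : ℕ) < n - 1
  · rw [heapLeaves, Finset.card_filter, Finset.card_eq_sum_ones]
    have hl := card_heapSubtree_add_one (heapLeft j hj)
    have hr := card_heapSubtree_add_one (heapRight j hj)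
    rw [heapLeaves, Finset.card_filter, Finset.card_eq_sum_ones] at hl hr
    rw [sum_heapSubtree_of_lt _ hj, sum_heapSubtree_of_lt _ hj, if_neg (by omega)]
    omega
  · rw [heapLeaves, heapSubtree_of_le (not_lt.1 hj), Finset.filter_singleton,
      if_pos (not_lt.1 hj)]
    rfl
termination_by 2 * n - 1 - j
decreasing_by all_goals simp only [heapLeft, heapRight]; omega

def heapLeaf (i : Fin n) : Fin (2 * n - 1) :=
  ⟨n - 1 + i, by omega⟩

theorem heapLeaf_injective : Function.Injective (heapLeaf (n := n)) :=
  fun _ _ h => Fin.ext (by simpa [heapLeaf] using h)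

theorem heapLeaves_root (h : 0 < 2 * n - 1) :
    heapLeaves (⟨0, h⟩ : Fin (2 * n - 1)) = Finset.univ.map ⟨heapLeaf, heapLeaf_injective⟩ := by
  ext ℓ
  simp only [heapLeaves, heapSubtree_root, Finset.mem_filter, Finset.mem_univ, true_and,
    Finset.mem_map, Function.Embedding.coeFn_mk, heapLeaf, Fin.ext_iff]
  exact ⟨fun hℓ => ⟨⟨ℓ - (n - 1), by omega⟩, by simp only; omega⟩, fun ⟨i, hi⟩ => by omega⟩

end HeapTree

section TreeRegion

variable {n : ℕ} (s : Fin n → ℕ) (a : Fin n → Bool)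

theorem leafWeight_of_lt {j : Fin (2 * n - 1)} (hj : (j : ℕ) < n - 1) : leafWeight n s a j = 0 :=
  dif_neg (by omega)

theorem leafWeight_heapLeaf (i : Fin n) :
    leafWeight n s a (heapLeaf i) = if a i then (s i : ℝ) else 0 := by
  have hi : (⟨n - 1 + i - (n - 1), by omega⟩ : Fin n) = i := Fin.ext (by simp)
  simp only [leafWeight, heapLeaf, le_add_iff_nonneg_right, zero_le, dite_true, hi]

def treeSlack (x : Fin (2 * n - 1) → ℝ) (j : Fin (2 * n - 1)) : ℝ :=
  if hj : (j : ℕ) < n - 1 then x j - (x (heapLeft j hj) + x (heapRight j hj))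
  else x j - leafWeight n s a j

theorem mem_treeRegion_iff {x : Fin (2 * n - 1) → ℝ} :
    x ∈ treeRegion n s a ↔ ∀ j, |treeSlack s a x j| < 1 / (4 * n) := by
  simp only [treeRegion, Set.mem_ofPred_eq, treeSlack, heapLeft, heapRight]
  constructor
  · rintro ⟨hleaf, hnode⟩ j
    split_ifs with hj
    · have := hnode j hj; rw [abs_sub_lt_iff]; constructor <;> linarith
    · have := hleaf j (by omega); rw [abs_sub_lt_iff]; constructor <;> linarith
  · intro h
    refine ⟨fun j hj => ?_, fun j hj => ?_⟩
    · have := h j; rw [dif_neg (by omega), abs_sub_lt_iff] at this; constructor <;> linarith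
    · have := h j; rw [dif_pos hj, abs_sub_lt_iff] at this; constructor <;> linarith

def ofSlack (δ : Fin (2 * n - 1) → ℝ) (j : Fin (2 * n - 1)) : ℝ :=
  ∑ ℓ ∈ heapSubtree j, (leafWeight n s a ℓ + δ ℓ)

theorem ofSlack_of_lt (δ : Fin (2 * n - 1) → ℝ) {j : Fin (2 * n - 1)} (hj : (j : ℕ) < n - 1) :
    ofSlack s a δ j = δ j + ofSlack s a δ (heapLeft j hj) + ofSlack s a δ (heapRight j hj) := by
  rw [ofSlack, sum_heapSubtree_of_lt _ hj, leafWeight_of_lt s a hj, zero_add, ofSlack, ofSlack]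

theorem ofSlack_of_le (δ : Fin (2 * n - 1) → ℝ) {j : Fin (2 * n - 1)} (hj : n - 1 ≤ (j : ℕ)) :
    ofSlack s a δ j = leafWeight n s a j + δ j := by
  rw [ofSlack, heapSubtree_of_le hj, Finset.sum_singleton]

theorem treeSlack_ofSlack (δ : Fin (2 * n - 1) → ℝ) : treeSlack s a (ofSlack s a δ) = δ := by
  funext j
  unfold treeSlack
  split_ifs with hj
  · rw [ofSlack_of_lt s a δ hj]; ring
  · rw [ofSlack_of_le s a δ (by omega)]; ring

theorem ofSlack_treeSlack_apply (x : Fin (2 * n - 1) → ℝ) (j : Fin (2 * n - 1)) :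
    ofSlack s a (treeSlack s a x) j = x j := by
  by_cases hj : (j : ℕ) < n - 1
  · rw [ofSlack_of_lt s a _ hj, ofSlack_treeSlack_apply x (heapLeft j hj),
      ofSlack_treeSlack_apply x (heapRight j hj), treeSlack, dif_pos hj]
    ring
  · rw [ofSlack_of_le s a _ (by omega), treeSlack, dif_neg hj]
    ring
termination_by 2 * n - 1 - j
decreasing_by all_goals simp only [heapLeft, heapRight]; omega

theorem treeRegion_eq_image_ofSlack :
    treeRegion n s a = ofSlack s a '' {δ | ∀ j, |δ j| < 1 / (4 * n)} := by
  ext x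
  constructor
  · intro hx
    exact ⟨treeSlack s a x, (mem_treeRegion_iff s a).1 hx, funext (ofSlack_treeSlack_apply s a x)⟩
  · rintro ⟨δ, hδ, rfl⟩
    rw [mem_treeRegion_iff, treeSlack_ofSlack]
    exact hδ

theorem sum_leafWeight_heapSubtree (j : Fin (2 * n - 1)) :
    ∑ ℓ ∈ heapSubtree j, leafWeight n s a ℓ = ∑ ℓ ∈ heapLeaves j, leafWeight n s a ℓ :=
  (Finset.sum_filter_of_ne fun _ _ h => not_lt.1 (mt (leafWeight_of_lt s a) h)).symm

theorem image_eval_treeRegion (j : Fin (2 * n - 1)) :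
    (fun x : Fin (2 * n - 1) → ℝ => x j) '' treeRegion n s a =
      Set.Ioo (∑ ℓ ∈ heapLeaves j, leafWeight n s a ℓ - (2 * (heapLeaves j).card - 1) / (4 * n))
        (∑ ℓ ∈ heapLeaves j, leafWeight n s a ℓ + (2 * (heapLeaves j).card - 1) / (4 * n)) := by
  have hcard : ((heapSubtree j).card : ℝ) = 2 * (heapLeaves j).card - 1 := by
    rw [eq_sub_iff_add_eq]; exact_mod_cast card_heapSubtree_add_one j
  have hsplit : (fun δ => ofSlack s a δ j) =
      (∑ ℓ ∈ heapLeaves j, leafWeight n s a ℓ + ·) ∘ fun δ => ∑ ℓ ∈ heapSubtree j, δ ℓ := by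
    funext δ
    simp only [ofSlack, Finset.sum_add_distrib, sum_leafWeight_heapSubtree, Function.comp_apply]
  rw [treeRegion_eq_image_ofSlack, Set.image_image, hsplit, Set.image_comp,
    Finset.image_sum_of_forall_abs_lt ⟨j, self_mem_heapSubtree j⟩, Set.image_const_add_Ioo, hcard]
  congr 1 <;> ring

theorem card_heapLeaves_root (h : 0 < 2 * n - 1) :
    (heapLeaves (⟨0, h⟩ : Fin (2 * n - 1))).card = n := by
  rw [heapLeaves_root, Finset.card_map, Finset.card_univ, Fintype.card_fin]

theorem sum_leafWeight_heapLeaves_root (h : 0 < 2 * n - 1) :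
    ∑ ℓ ∈ heapLeaves (⟨0, h⟩ : Fin (2 * n - 1)), leafWeight n s a ℓ =
      ((∑ i : Fin n, if a i then s i else 0 : ℕ) : ℝ) := by
  simp [heapLeaves_root, leafWeight_heapLeaf, apply_ite]

end TreeRegion

/-- for every bit vector `a` and every node `j` of the heap-indexed binary
tree, with `Leaves(j)` the set of leaf descendants of `j` (a leaf `ℓ` is a descendant of
`j` iff, in 1-based heap indexing, `(ℓ+1) / 2^t = j+1` for some `t`) and `d = |Leaves(j)|`,
the projection of `T_a` onto the `j`-th coordinate is exactly the open interval centered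
at `∑_{ℓ ∈ Leaves(j)} a_ℓ s_ℓ` with radius `(2d − 1)/(4n)`. In particular for the root
(with `d = n`) the projection is `(S(a) − (2n−1)/(4n), S(a) + (2n−1)/(4n))`, which is
contained in `(S(a) − 1/2, S(a) + 1/2)`. -/
theorem treeRegion_proj (k : ℕ) (n : ℕ) (hn : n = 2 ^ k)
    (s : Fin n → ℕ) (a : Fin n → Bool) (j : Fin (2 * n - 1)) :
    let Leaves : Set (Fin (2 * n - 1)) :=
      {ℓ | n - 1 ≤ (ℓ : ℕ) ∧ ∃ t : ℕ, ((ℓ : ℕ) + 1) / 2 ^ t = (j : ℕ) + 1}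
    let d : ℕ := Leaves.ncard
    let center : ℝ := ∑ᶠ ℓ ∈ Leaves, leafWeight n s a ℓ
    let Sa : ℕ := ∑ i : Fin n, if a i then s i else 0
    let root : Fin (2 * n - 1) := ⟨0, by have := Nat.one_le_two_pow (n := k); omega⟩
    ((fun x : Fin (2 * n - 1) → ℝ => x j) '' treeRegion n s a =
      Set.Ioo (center - (2 * (d : ℝ) - 1) / (4 * (n : ℝ)))
              (center + (2 * (d : ℝ) - 1) / (4 * (n : ℝ)))) ∧
    ((fun x : Fin (2 * n - 1) → ℝ => x root) '' treeRegion n s a =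
      Set.Ioo ((Sa : ℝ) - (2 * (n : ℝ) - 1) / (4 * (n : ℝ)))
              ((Sa : ℝ) + (2 * (n : ℝ) - 1) / (4 * (n : ℝ)))) ∧
    ((fun x : Fin (2 * n - 1) → ℝ => x root) '' treeRegion n s a ⊆
      Set.Ioo ((Sa : ℝ) - 1 / 2) ((Sa : ℝ) + 1 / 2)) := by
  intro Leaves d center Sa root
  have hLeaves : Leaves = heapLeaves j := by
    ext ℓ
    simp [Leaves, heapLeaves, mem_heapSubtree, and_comm]
  have hroot := image_eval_treeRegion s a root
  rw [card_heapLeaves_root, sum_leafWeight_heapLeaves_root] at hroot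
  have hnpos : (0 : ℝ) < n := by have := root.pos; exact_mod_cast (by omega : 0 < n)
  have hradius : (2 * (n : ℝ) - 1) / (4 * n) ≤ 1 / 2 := by
    rw [div_le_iff₀ (by positivity)]; linarith
  refine ⟨?_, hroot, hroot ▸ Set.Ioo_subset_Ioo (by linarith) (by linarith)⟩
  simpa only [d, center, hLeaves, Set.ncard_coe_finset, finsum_mem_coe_finset]
    using image_eval_treeRegion s a j
end
end

section
/- Let D = ⋃_{a ∈ {0,1}ⁿ} T_a ⊆ ℝ^{2n−1} (the model region of the tree-structured formula Δ, whose leaf clauses are the disjunctions of the two literals for each leaf). Then for every Lebesgue-measurable set Q ⊆ ℝ^{2n−1}, the volume of D ∩ Q equals ∑_{a ∈ {0,1}ⁿ} volume(T_a ∩ Q); in particular, the volume of D equals 2ⁿ·(1/(2n))^{2n−1}. -/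
open MeasureTheory
open scoped ENNReal

noncomputable section

/-!
In the coordinates `y_j = x_j - x_{2j+1} - x_{2j+2}` at internal nodes and `y_j = x_j` at leaves,
each `T_a` becomes an open box of side `1/(2n)` centred at the leaf weights. This change of
variables is unitriangular in heap order (children come after their parent), so it preserves
volume and `vol T_a = (1/(2n))^(2n-1)`. Two distinct `a` differ at some leaf `i`, where the boxes
are centred at `0` and at `s_i ≥ 1 > 2 · 1/(4n)`, so the `T_a` are pairwise disjoint and volume
is additive over them.
-/

theorem MeasureTheory.measure_iUnion_inter_eq_sum {α ι : Type*} [MeasurableSpace α] [Fintype ι]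
    (μ : Measure α) {T : ι → Set α} (hT : ∀ i, MeasurableSet (T i))
    (hd : Pairwise (Function.onFun Disjoint T)) (Q : Set α) :
    μ ((⋃ i, T i) ∩ Q) = ∑ i, μ (T i ∩ Q) := by
  rw [← Measure.restrict_apply (MeasurableSet.iUnion hT), measure_iUnion hd hT, tsum_fintype]
  simp only [Measure.restrict_apply (hT _)]

namespace TreeRegion

variable {n : ℕ}

def residual (n : ℕ) : (Fin (2 * n - 1) → ℝ) →ₗ[ℝ] (Fin (2 * n - 1) → ℝ) where
  toFun x j := if h : (j : ℕ) < n - 1 then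
      x j - x ⟨2 * (j : ℕ) + 1, by omega⟩ - x ⟨2 * (j : ℕ) + 2, by omega⟩ else x j
  map_add' x y := by
    funext j; by_cases h : (j : ℕ) < n - 1 <;> simp [h]; ring
  map_smul' c x := by
    funext j; by_cases h : (j : ℕ) < n - 1 <;> simp [h]; ring

lemma residual_apply_of_lt (x : Fin (2 * n - 1) → ℝ) {j : Fin (2 * n - 1)}
    (h : (j : ℕ) < n - 1) :
    residual n x j = x j - x ⟨2 * (j : ℕ) + 1, by omega⟩ - x ⟨2 * (j : ℕ) + 2, by omega⟩ :=
  dif_pos h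

lemma residual_apply_of_le (x : Fin (2 * n - 1) → ℝ) {j : Fin (2 * n - 1)}
    (h : n - 1 ≤ (j : ℕ)) :
    residual n x j = x j :=
  dif_neg (not_lt.2 h)

lemma toMatrix'_residual_of_le {i j : Fin (2 * n - 1)} (hji : j ≤ i) :
    LinearMap.toMatrix' (residual n) i j = if i = j then 1 else 0 := by
  have hchild : ∀ c : Fin (2 * n - 1), (i : ℕ) < c → Pi.single (M := fun _ ↦ ℝ) j 1 c = 0 :=
    fun c hc ↦ Pi.single_eq_of_ne (fun e ↦ by subst e; exact absurd hji (by simp; omega)) _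
  rw [LinearMap.toMatrix'_apply]
  by_cases h : (i : ℕ) < n - 1
  · rw [residual_apply_of_lt _ h, hchild ⟨2 * (i : ℕ) + 1, by omega⟩ (by simp; omega),
      hchild ⟨2 * (i : ℕ) + 2, by omega⟩ (by simp; omega)]
    simp [Pi.single_apply]
  · rw [residual_apply_of_le _ (by omega)]
    simp [Pi.single_apply]

lemma isUpperTriangular_toMatrix'_residual :
    (LinearMap.toMatrix' (residual n)).IsUpperTriangular := fun _ _ hij ↦
  (toMatrix'_residual_of_le hij.le).trans (if_neg hij.ne')

lemma det_residual : LinearMap.det (residual n) = 1 := by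
  rw [← LinearMap.det_toMatrix',
    Matrix.det_of_isUpperTriangular isUpperTriangular_toMatrix'_residual]
  exact Finset.prod_eq_one fun i _ ↦ by simp [toMatrix'_residual_of_le le_rfl]

lemma leafWeight_of_lt (s : Fin n → ℕ) (a : Fin n → Bool) {j : Fin (2 * n - 1)}
    (h : (j : ℕ) < n - 1) : leafWeight n s a j = 0 :=
  dif_neg (not_le.2 h)

def leaf (i : Fin n) : Fin (2 * n - 1) := ⟨n - 1 + i, by omega⟩

lemma leafWeight_leaf (s : Fin n → ℕ) (a : Fin n → Bool) (i : Fin n) :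
    leafWeight n s a (leaf i) = if a i then (s i : ℝ) else 0 := by
  simp [leafWeight, leaf]

lemma treeRegion_eq_preimage_pi (s : Fin n → ℕ) (a : Fin n → Bool) :
    treeRegion n s a = residual n ⁻¹' Set.univ.pi fun j ↦
      Set.Ioo (leafWeight n s a j - 1 / (4 * (n : ℝ)))
        (leafWeight n s a j + 1 / (4 * (n : ℝ))) := by
  ext x
  simp only [treeRegion, Set.mem_ofPred_eq, Set.mem_preimage, Set.mem_univ_pi, Set.mem_Ioo]
  constructor
  · rintro ⟨hleaf, hnode⟩ j
    by_cases hj : (j : ℕ) < n - 1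
    · rw [residual_apply_of_lt _ hj, leafWeight_of_lt s a hj]
      constructor <;> linarith [hnode j hj]
    · rw [residual_apply_of_le _ (by omega)]
      exact hleaf j (by omega)
  · intro h
    refine ⟨fun j hj ↦ ?_, fun j hj ↦ ?_⟩
    · simpa only [residual_apply_of_le _ hj] using h j
    · have hj' := h j
      rw [residual_apply_of_lt _ hj, leafWeight_of_lt s a hj] at hj'
      constructor <;> linarith [hj'.1, hj'.2]

lemma measurableSet_treeRegion (s : Fin n → ℕ) (a : Fin n → Bool) :
    MeasurableSet (treeRegion n s a) := by
  rw [treeRegion_eq_preimage_pi]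
  exact (residual n).continuous_of_finiteDimensional.measurable
    (MeasurableSet.univ_pi fun _ ↦ measurableSet_Ioo)

lemma volume_treeRegion (s : Fin n → ℕ) (a : Fin n → Bool) :
    volume (treeRegion n s a) = (1 / (2 * (n : ℝ≥0∞))) ^ (2 * n - 1) := by
  rw [treeRegion_eq_preimage_pi, Measure.addHaar_preimage_linearMap _ (by simp [det_residual]),
    det_residual, volume_pi_pi]
  simp only [inv_one, abs_one, ENNReal.ofReal_one, one_mul, Real.volume_Ioo]
  rw [← Fin.prod_const]
  refine Finset.prod_congr rfl fun j _ ↦ ?_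
  have hn : 0 < n := by have := j.isLt; omega
  rw [show ∀ w : ℝ, w + 1 / (4 * n) - (w - 1 / (4 * n)) = (2 * (n : ℝ))⁻¹ from fun w ↦ by ring,
    ENNReal.ofReal_inv_of_pos (by positivity), one_div]
  norm_cast

lemma pairwise_disjoint_treeRegion {s : Fin n → ℕ} (hs : ∀ i, 0 < s i) :
    Pairwise (Function.onFun Disjoint (treeRegion n s)) := by
  intro a b hab
  obtain ⟨i, hi⟩ := Function.ne_iff.1 hab
  have hgap : (s i : ℝ) ≤ |leafWeight n s a (leaf i) - leafWeight n s b (leaf i)| := by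
    rw [leafWeight_leaf, leafWeight_leaf]
    revert hi
    cases a i <;> cases b i <;> simp
  have hwidth : 2 * (1 / (4 * (n : ℝ))) < s i := by
    have : (1 : ℝ) ≤ n := by exact_mod_cast i.pos
    have : (1 : ℝ) ≤ s i := by exact_mod_cast hs i
    calc 2 * (1 / (4 * (n : ℝ))) ≤ 2 * (1 / 4) := by gcongr; linarith
      _ < s i := by linarith
  refine Set.disjoint_left.2 fun x hxa hxb ↦ ?_
  have ha := hxa.1 (leaf i) (by simp [leaf])
  have hb := hxb.1 (leaf i) (by simp [leaf])
  have hclose :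
      |leafWeight n s a (leaf i) - leafWeight n s b (leaf i)| < 2 * (1 / (4 * (n : ℝ))) := by
    rw [abs_sub_lt_iff]
    constructor <;> linarith
  linarith

end TreeRegion

theorem treeRegion_union_volume_general (n : ℕ)
    (s : Fin n → ℕ) (hs : ∀ i, 0 < s i) :
    (∀ Q : Set (Fin (2 * n - 1) → ℝ), MeasurableSet Q →
      volume ((⋃ a : Fin n → Bool, treeRegion n s a) ∩ Q)
        = ∑ a : Fin n → Bool, volume (treeRegion n s a ∩ Q)) ∧
    volume (⋃ a : Fin n → Bool, treeRegion n s a)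
      = 2 ^ n * (1 / (2 * (n : ℝ≥0∞))) ^ (2 * n - 1) := by
  have hsplit := measure_iUnion_inter_eq_sum volume (TreeRegion.measurableSet_treeRegion s)
    (TreeRegion.pairwise_disjoint_treeRegion hs)
  refine ⟨fun Q _ ↦ hsplit Q, ?_⟩
  simpa [TreeRegion.volume_treeRegion] using hsplit Set.univ

/-- let `D = ⋃_{a ∈ {0,1}ⁿ} T_a ⊆ ℝ^{2n−1}` be the model region of the
tree-structured formula. For every Lebesgue-measurable `Q`,
`volume (D ∩ Q) = ∑_a volume (T_a ∩ Q)`; in particular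
`volume D = 2ⁿ · (1/(2n))^{2n−1}`. -/
theorem treeRegion_union_volume (k : ℕ) (hk : 1 ≤ k) (n : ℕ) (hn : n = 2 ^ k)
    (s : Fin n → ℕ) (hs : ∀ i, 0 < s i) :
    (∀ Q : Set (Fin (2 * n - 1) → ℝ), MeasurableSet Q →
      volume ((⋃ a : Fin n → Bool, treeRegion n s a) ∩ Q)
        = ∑ a : Fin n → Bool, volume (treeRegion n s a ∩ Q)) ∧
    volume (⋃ a : Fin n → Bool, treeRegion n s a)
      = 2 ^ n * (1 / (2 * (n : ℝ≥0∞))) ^ (2 * n - 1) :=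
  treeRegion_union_volume_general n s hs
end
end

section
/- (Proposition 6: bivariate queries via message passing.) Let {i, j} ∈ E be an edge and let Q ⊆ ℝ × ℝ be a Lebesgue-measurable query set on the pair (x_i, x_j). Define the updated message m*_{j→i} : ℝ → [0, ∞] by m*_{j→i}(t) = ∫_ℝ ( ∏_{c ∈ N(j)∖{i}} m_{c→j}(x_j) ) · 1[(t, x_j) ∈ D_{ij} and (t, x_j) ∈ Q] · 1[x_j ∈ D_j] dx_j (this product of incoming messages is the quantity the paper writes as b_j(x_j)/m_{i→j}(x_j)). Then the Lebesgue volume of Δ ∩ {x ∈ ℝ^V : (x_i, x_j) ∈ Q} equals ∫_ℝ 1[t ∈ D_i] · m*_{j→i}(t) · ∏_{c ∈ N(i)∖{j}} m_{c→i}(t) dt. -/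
/-!
Deleting the edge `{c, r}` of the tree splits the vertices into the branch of `c` and the branch
of `r`, and `D_{cr}` is the only constraint joining them. Integrating a weight `f(x_c, x_r)` against
the constraints inside the branch of `c`, over the variables of that branch, therefore gives
`∫ f(t, x_r) 1[t ∈ D_c] ∏_{d ≠ r} m_{d→c}(t) dt`: the branch of `c` is `c` together with the
branches of its other neighbours `d`, each attached to `c` by the single edge `{d, c}`, and by
strong induction on the size of the branch, integrating out the branch of `d` contributes the
factor `m_{d→c}(x_c)`. Cutting `ℝ^V` along `{i, j}`, this is applied first to the branch of `j`
with the weight `1[(x_i, x_j) ∈ D_{ij} ∩ Q]`, which produces `m*_{j→i}(x_i)`, and then to the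
branch of `i`.
-/

open MeasureTheory
open scoped ENNReal

noncomputable section

/-- The model region `Δ ⊆ ℝ^V` : the set of points `x` with `x_i ∈ D_i` for every vertex
`i` and `(x_i, x_j) ∈ D_{ij}` for every edge `{i,j}`. -/
def mpModel {V : Type*} (G : SimpleGraph V) (D : V → Set ℝ) (Dij : V → V → Set (ℝ × ℝ)) :
    Set (V → ℝ) :=
  {x | (∀ i, x i ∈ D i) ∧ ∀ i j, G.Adj i j → (x i, x j) ∈ Dij i j}

namespace SimpleGraph

variable {V : Type*} [Fintype V] {G : SimpleGraph V} {c r d v w : V}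

open Classical in
def branch (G : SimpleGraph V) (c r : V) : Finset V :=
  {v | (G.deleteEdges {s(c, r)}).Reachable c v}

theorem mem_branch : v ∈ G.branch c r ↔ (G.deleteEdges {s(c, r)}).Reachable c v := by
  classical simp [branch]

theorem mem_branch_iff_exists_walk : v ∈ G.branch c r ↔ ∃ p : G.Walk c v, s(c, r) ∉ p.edges := by
  rw [mem_branch, reachable_deleteEdges_iff_exists_walk]

theorem self_mem_branch : c ∈ G.branch c r := mem_branch.2 .rfl

theorem IsAcyclic.notMem_branch (hG : G.IsAcyclic) (hcr : G.Adj c r) : r ∉ G.branch c r :=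
  fun h => isBridge_iff.1 (isAcyclic_iff_forall_adj_isBridge.1 hG hcr) (mem_branch.1 h)

theorem IsAcyclic.disjoint_branch (hG : G.IsAcyclic) (hcr : G.Adj c r) :
    Disjoint (G.branch c r) (G.branch r c) := by
  refine Finset.disjoint_left.2 fun v hc hr => hG.notMem_branch hcr (mem_branch.2 ?_)
  rw [mem_branch, Sym2.eq_swap] at hr
  exact (mem_branch.1 hc).trans hr.symm

theorem Connected.branch_union_branch [DecidableEq V] (hG : G.Connected) (c r : V) :
    G.branch c r ∪ G.branch r c = Finset.univ := by
  refine Finset.eq_univ_of_forall fun v => ?_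
  simp only [Finset.mem_union, mem_branch, Sym2.eq_swap (a := r)]
  suffices ∀ {u z} (p : G.Walk u z), z = c →
      (G.deleteEdges {s(c, r)}).Reachable c u ∨ (G.deleteEdges {s(c, r)}).Reachable r u from
    this (hG.preconnected v c).some rfl
  intro u z p
  induction p with
  | nil => rintro rfl; exact .inl .rfl
  | @cons u w _ huw _ ih =>
    intro hz
    by_cases he : s(u, w) = s(c, r)
    · rcases Sym2.eq_iff.1 he with ⟨rfl, -⟩ | ⟨rfl, -⟩
      exacts [.inl .rfl, .inr .rfl]
    · have hwu : (G.deleteEdges {s(c, r)}).Adj w u := by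
        rw [deleteEdges_adj, Set.mem_singleton_iff, Sym2.eq_swap]; exact ⟨huw.symm, he⟩
      exact (ih hz).imp (·.trans hwu.reachable) (·.trans hwu.reachable)

theorem IsAcyclic.eq_of_adj_of_mem_branch (hG : G.IsAcyclic) (hcr : G.Adj c r)
    (hv : v ∈ G.branch c r) (hw : w ∉ G.branch c r) (hvw : G.Adj v w) : v = c ∧ w = r := by
  have he : s(v, w) = s(c, r) := by
    by_contra he
    have hvw' : (G.deleteEdges {s(c, r)}).Adj v w := by
      rw [deleteEdges_adj, Set.mem_singleton_iff]; exact ⟨hvw, he⟩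
    exact hw (mem_branch.2 ((mem_branch.1 hv).trans hvw'.reachable))
  rcases Sym2.eq_iff.1 he with h | ⟨rfl, -⟩
  · exact h
  · exact absurd hv (hG.notMem_branch hcr)

theorem IsAcyclic.branch_subset_branch (hG : G.IsAcyclic) (hcd : G.Adj c d) (hdr : d ≠ r) :
    G.branch d c ⊆ G.branch c r := by
  classical
  intro v hv
  obtain ⟨p, hp⟩ := mem_branch_iff_exists_walk.1 hv
  refine mem_branch_iff_exists_walk.2 ⟨.cons hcd p, ?_⟩
  rw [Walk.edges_cons, List.mem_cons, not_or]
  refine ⟨fun h => hdr (Sym2.congr_right.1 h.symm), fun hcr => ?_⟩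
  have hc := p.fst_mem_support_of_mem_edges hcr
  refine hG.notMem_branch hcd.symm (mem_branch_iff_exists_walk.2 ⟨p.takeUntil c hc, ?_⟩)
  exact fun h => hp (p.edges_takeUntil_subset_edges hc h)

theorem IsAcyclic.disjoint_branch_of_ne (hG : G.IsAcyclic) (hcd : G.Adj c d) (hcr : G.Adj c r)
    (hdr : d ≠ r) : Disjoint (G.branch d c) (G.branch r c) :=
  (hG.disjoint_branch hcr).mono_left (hG.branch_subset_branch hcd hdr)

theorem IsAcyclic.disjoint_branch_insert_biUnion [DecidableEq V] (hG : G.IsAcyclic)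
    (hcd : G.Adj c d) {B : Finset V} (hB : ∀ e ∈ B, G.Adj c e) (hdB : d ∉ B) :
    Disjoint (G.branch d c) (insert c (B.biUnion (G.branch · c))) :=
  Finset.disjoint_insert_right.2 ⟨hG.notMem_branch hcd.symm, (Finset.disjoint_biUnion_right _ _ _).2
    fun e he => hG.disjoint_branch_of_ne hcd (hB e he) fun h => hdB (h ▸ he)⟩

theorem IsAcyclic.branch_eq_insert_biUnion [DecidableEq V] [DecidableRel G.Adj]
    (hG : G.IsAcyclic) (hcr : G.Adj c r) :
    G.branch c r = insert c (((G.neighborFinset c).erase r).biUnion (G.branch · c)) := by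
  ext v
  simp only [Finset.mem_insert, Finset.mem_biUnion, Finset.mem_erase, mem_neighborFinset]
  constructor
  · intro hv
    refine or_iff_not_imp_left.2 fun hvc => ?_
    obtain ⟨p, hp⟩ := mem_branch_iff_exists_walk.1 hv
    have hpath := p.bypass_isPath
    have hedges := p.edges_bypass_subset_edges
    cases h : p.bypass with
    | nil => exact absurd rfl hvc
    | @cons _ d _ hcd q =>
      rw [h, Walk.cons_isPath_iff] at hpath
      rw [h, Walk.edges_cons] at hedges
      refine ⟨d, ⟨fun hdr => hp (hdr ▸ hedges (List.mem_cons_self ..)), hcd⟩, ?_⟩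
      exact mem_branch_iff_exists_walk.2
        ⟨q, fun he => hpath.2 (q.snd_mem_support_of_mem_edges he)⟩
  · rintro (rfl | ⟨d, ⟨hdr, hcd⟩, hv⟩)
    exacts [self_mem_branch, hG.branch_subset_branch hcd hdr hv]

theorem IsAcyclic.card_branch_lt (hG : G.IsAcyclic) (hcd : G.Adj c d) (hdr : d ≠ r) :
    (G.branch d c).card < (G.branch c r).card :=
  Finset.card_lt_card <| (Finset.ssubset_iff_of_subset (hG.branch_subset_branch hcd hdr)).2
    ⟨c, self_mem_branch, hG.notMem_branch hcd.symm⟩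

end SimpleGraph

namespace MeasureTheory

variable {δ : Type*} [DecidableEq δ] {X : δ → Type*} [∀ i, MeasurableSpace (X i)]
  {μ : ∀ i, Measure (X i)} {s : Finset δ} {f g : (∀ i, X i) → ℝ≥0∞}

theorem lmarginal_mul_of_dependsOn [∀ i, SigmaFinite (μ i)] (hf : DependsOn f (↑s)ᶜ)
    (hg : Measurable g) (x : ∀ i, X i) :
    (∫⋯∫⁻_s, fun y => f y * g y ∂μ) x = f x * (∫⋯∫⁻_s, g ∂μ) x := by
  have hfx : ∀ y, f (Function.updateFinset x s y) = f x := fun y =>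
    hf fun i hi => by simp [Function.updateFinset_def, show i ∉ s from hi]
  simp only [lmarginal, hfx]
  exact lintegral_const_mul _ (hg.comp measurable_updateFinset)

end MeasureTheory

theorem Measurable.of_comp_eval {δ : Type*} [DecidableEq δ] {X : δ → Type*}
    [∀ i, MeasurableSpace (X i)] [∀ i, Nonempty (X i)] {β : Type*} [MeasurableSpace β]
    {i : δ} {g : X i → β} {F : (∀ i, X i) → β} (hF : Measurable F) (h : ∀ x, g (x i) = F x) :
    Measurable g := by
  obtain ⟨x₀⟩ : Nonempty (∀ i, X i) := inferInstance
  have : g = F ∘ Function.update x₀ i := funext fun t => by simp [← h]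
  exact this ▸ hF.comp (measurable_update x₀)

section MessagePassing

open SimpleGraph

variable {V : Type*} {G : SimpleGraph V} {D : V → Set ℝ} {Dij : V → V → Set (ℝ × ℝ)}

def mpModelOn (G : SimpleGraph V) (D : V → Set ℝ) (Dij : V → V → Set (ℝ × ℝ)) (S : Finset V) :
    Set (V → ℝ) :=
  {x | ∀ v ∈ S, x v ∈ D v ∧ ∀ w ∈ S, G.Adj v w → (x v, x w) ∈ Dij v w}

theorem mpModelOn_univ [Fintype V] : mpModelOn G D Dij Finset.univ = mpModel G D Dij := by
  ext x
  simp [mpModelOn, mpModel, forall_and]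

theorem mem_mpModelOn_singleton {c : V} {x : V → ℝ} : x ∈ mpModelOn G D Dij {c} ↔ x c ∈ D c := by
  simp [mpModelOn]

theorem mpModelOn_anti {S T : Finset V} (h : S ⊆ T) :
    mpModelOn G D Dij T ⊆ mpModelOn G D Dij S :=
  fun _ hx v hv => ⟨(hx v (h hv)).1, fun w hw => (hx v (h hv)).2 w (h hw)⟩

theorem measurableSet_mpModelOn [Countable V] (hD : ∀ i, MeasurableSet (D i))
    (hDij : ∀ i j, MeasurableSet (Dij i j)) (S : Finset V) :
    MeasurableSet (mpModelOn G D Dij S) := by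
  simp only [mpModelOn, Set.ofPred_forall, Set.ofPred_and]
  exact .iInter fun v => .iInter fun _ => ((hD v).preimage (measurable_pi_apply v)).inter <|
    .iInter fun w => .iInter fun _ => .iInter fun _ =>
      (hDij v w).preimage ((measurable_pi_apply v).prodMk (measurable_pi_apply w))

theorem measurable_mul_indicator_mpModelOn [Countable V] (hD : ∀ i, MeasurableSet (D i))
    (hDij : ∀ i j, MeasurableSet (Dij i j)) {f : ℝ → ℝ → ℝ≥0∞}
    (hf : Measurable (Function.uncurry f)) (a b : V) (S : Finset V) :
    Measurable fun y : V → ℝ => f (y a) (y b) * (mpModelOn G D Dij S).indicator 1 y := by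
  have hfab : Measurable fun y : V → ℝ => Function.uncurry f (y a, y b) :=
    hf.comp ((measurable_pi_apply a).prodMk (measurable_pi_apply b))
  exact hfab.mul (measurable_const.indicator (measurableSet_mpModelOn hD hDij S))

theorem dependsOn_indicator_mpModelOn (S : Finset V) :
    DependsOn ((mpModelOn G D Dij S).indicator (1 : (V → ℝ) → ℝ≥0∞)) S := by
  classical
  intro x y h
  have hxy : x ∈ mpModelOn G D Dij S ↔ y ∈ mpModelOn G D Dij S :=
    forall₂_congr fun v hv => and_congr (by rw [h v hv])
      (forall₂_congr fun w hw => by rw [h v hv, h w hw])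
  simp only [Set.indicator_apply, hxy, Pi.one_apply]

variable [Fintype V] [DecidableEq V]

theorem mem_mpModelOn_branch_union_iff (hG : G.IsAcyclic)
    (hsym : ∀ i j, ∀ p : ℝ × ℝ, p ∈ Dij i j ↔ p.swap ∈ Dij j i) {a b : V} (hab : G.Adj a b)
    {T : Finset V} (hT : Disjoint (G.branch a b) T) (hbT : b ∈ T) {x : V → ℝ} :
    x ∈ mpModelOn G D Dij (G.branch a b ∪ T) ↔
      (x a, x b) ∈ Dij a b ∧ x ∈ mpModelOn G D Dij (G.branch a b) ∧ x ∈ mpModelOn G D Dij T := by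
  refine ⟨fun hx => ⟨?_, mpModelOn_anti Finset.subset_union_left hx,
    mpModelOn_anti Finset.subset_union_right hx⟩, ?_⟩
  · exact (hx a (Finset.mem_union_left _ self_mem_branch)).2 b
      (Finset.mem_union_right _ hbT) hab
  rintro ⟨hxab, hxS, hxT⟩ v hv
  have cross : ∀ {v w}, v ∈ G.branch a b → w ∈ T → G.Adj v w → v = a ∧ w = b :=
    fun hv hw hvw => hG.eq_of_adj_of_mem_branch hab hv (Finset.disjoint_right.1 hT hw) hvw
  rcases Finset.mem_union.1 hv with hv | hv
  · refine ⟨(hxS v hv).1, fun w hw hvw => ?_⟩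
    rcases Finset.mem_union.1 hw with hw | hw
    · exact (hxS v hv).2 w hw hvw
    · obtain ⟨rfl, rfl⟩ := cross hv hw hvw
      exact hxab
  · refine ⟨(hxT v hv).1, fun w hw hvw => ?_⟩
    rcases Finset.mem_union.1 hw with hw | hw
    · obtain ⟨rfl, rfl⟩ := cross hw hv hvw.symm
      exact (hsym _ _ _).1 hxab
    · exact (hxT v hv).2 w hw hvw

theorem indicator_mpModelOn_branch_union (hG : G.IsAcyclic)
    (hsym : ∀ i j, ∀ p : ℝ × ℝ, p ∈ Dij i j ↔ p.swap ∈ Dij j i) {a b : V} (hab : G.Adj a b)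
    {T : Finset V} (hT : Disjoint (G.branch a b) T) (hbT : b ∈ T) (x : V → ℝ) :
    (mpModelOn G D Dij (G.branch a b ∪ T)).indicator (1 : (V → ℝ) → ℝ≥0∞) x =
      (Dij a b).indicator 1 (x a, x b) * (mpModelOn G D Dij (G.branch a b)).indicator 1 x *
        (mpModelOn G D Dij T).indicator 1 x := by
  classical
  simp only [Set.indicator_apply, mem_mpModelOn_branch_union_iff hG hsym hab hT hbT,
    Pi.one_apply]
  split_ifs <;> simp_all

theorem indicator_mpModel_eq_branch_mul (hG : G.IsTree)
    (hsym : ∀ i j, ∀ p : ℝ × ℝ, p ∈ Dij i j ↔ p.swap ∈ Dij j i) {i j : V} (hij : G.Adj i j)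
    (x : V → ℝ) :
    (mpModel G D Dij).indicator (1 : (V → ℝ) → ℝ≥0∞) x =
      (mpModelOn G D Dij (G.branch i j)).indicator 1 x *
      ((Dij i j).indicator 1 (x i, x j) * (mpModelOn G D Dij (G.branch j i)).indicator 1 x) := by
  rw [← mpModelOn_univ, ← hG.1.branch_union_branch i j, indicator_mpModelOn_branch_union hG.2
    hsym hij (hG.2.disjoint_branch hij) self_mem_branch]
  ring

theorem lmarginal_mul_indicator_mpModelOn_union_branch (hG : G.IsAcyclic)
    (hD : ∀ i, MeasurableSet (D i)) (hDij : ∀ i j, MeasurableSet (Dij i j))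
    (hsym : ∀ i j, ∀ p : ℝ × ℝ, p ∈ Dij i j ↔ p.swap ∈ Dij j i) {c d : V} (hcd : G.Adj c d)
    {S : Finset V} (hdisj : Disjoint (G.branch d c) S) (hcS : c ∈ S)
    {φ : (V → ℝ) → ℝ≥0∞} (hφ : DependsOn φ (↑(G.branch d c))ᶜ) (x : V → ℝ) :
    (∫⋯∫⁻_(G.branch d c), fun y => φ y * (mpModelOn G D Dij (S ∪ G.branch d c)).indicator 1 y) x =
      φ x * (mpModelOn G D Dij S).indicator 1 x *
        (∫⋯∫⁻_(G.branch d c), fun y => (Dij d c).indicator 1 (y d, y c) *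
          (mpModelOn G D Dij (G.branch d c)).indicator 1 y) x := by
  have hsplit : (fun y => φ y * (mpModelOn G D Dij (S ∪ G.branch d c)).indicator 1 y) =
      fun y => (φ y * (mpModelOn G D Dij S).indicator 1 y) *
        ((Dij d c).indicator 1 (y d, y c) * (mpModelOn G D Dij (G.branch d c)).indicator 1 y) := by
    funext y
    rw [Finset.union_comm, indicator_mpModelOn_branch_union hG hsym hcd.symm hdisj hcS]
    ring
  have hindep : DependsOn (fun y => φ y * (mpModelOn G D Dij S).indicator 1 y)
      (↑(G.branch d c))ᶜ := by
    intro y y' h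
    dsimp only
    rw [hφ h, dependsOn_indicator_mpModelOn S fun v hv => h v (Finset.disjoint_right.1 hdisj hv)]
  rw [hsplit, lmarginal_mul_of_dependsOn hindep (measurable_mul_indicator_mpModelOn hD hDij
    (f := fun a b => (Dij d c).indicator 1 (a, b)) (measurable_const.indicator (hDij d c)) d c _)]

theorem measurable_of_lmarginal_branch_eq (hD : ∀ i, MeasurableSet (D i))
    (hDij : ∀ i j, MeasurableSet (Dij i j)) {c r : V} {g : ℝ → ℝ≥0∞}
    (h : ∀ x : V → ℝ, (∫⋯∫⁻_(G.branch c r), fun y => (Dij c r).indicator 1 (y c, y r) *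
      (mpModelOn G D Dij (G.branch c r)).indicator 1 y) x = g (x r)) :
    Measurable g :=
  .of_comp_eval (X := fun _ : V => ℝ) (i := r) ((measurable_mul_indicator_mpModelOn hD hDij
    (f := fun a b => (Dij c r).indicator 1 (a, b)) (measurable_const.indicator (hDij c r))
    c r _).lmarginal (fun _ => volume)) fun x => (h x).symm

def SatisfiesMessageRecursion (G : SimpleGraph V) [DecidableRel G.Adj] (D : V → Set ℝ)
    (Dij : V → V → Set (ℝ × ℝ)) (m : V → V → ℝ → ℝ≥0∞) : Prop :=
  ∀ i j, G.Adj i j → ∀ t : ℝ,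
    m i j t = ∫⁻ x : ℝ,
      (Dij i j).indicator (1 : ℝ × ℝ → ℝ≥0∞) (x, t) *
        (D i).indicator (1 : ℝ → ℝ≥0∞) x *
        ∏ c ∈ (G.neighborFinset i).erase j, m c i x

variable [DecidableRel G.Adj] {m : V → V → ℝ → ℝ≥0∞}

theorem lmarginal_mpModelOn_insert_biUnion_branch (hG : G.IsAcyclic)
    (hD : ∀ i, MeasurableSet (D i)) (hDij : ∀ i j, MeasurableSet (Dij i j))
    (hsym : ∀ i j, ∀ p : ℝ × ℝ, p ∈ Dij i j ↔ p.swap ∈ Dij j i) {c r : V} (hcr : G.Adj c r)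
    {B : Finset V} (hB : B ⊆ (G.neighborFinset c).erase r)
    (hmsg : ∀ d ∈ B, ∀ x : V → ℝ,
      (∫⋯∫⁻_(G.branch d c), fun y => (Dij d c).indicator 1 (y d, y c) *
        (mpModelOn G D Dij (G.branch d c)).indicator 1 y) x = m d c (x c))
    {f : ℝ → ℝ → ℝ≥0∞} (hf : Measurable (Function.uncurry f)) (x : V → ℝ) :
    (∫⋯∫⁻_(insert c (B.biUnion (G.branch · c))), fun y => f (y c) (y r) *
      (mpModelOn G D Dij (insert c (B.biUnion (G.branch · c)))).indicator 1 y) x =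
      ∫⁻ t, f t (x r) * (D c).indicator 1 t * ∏ d ∈ B, m d c t := by
  -- The neighbours in `B` are glued to `c` one at a time; `f` absorbs the messages collected.
  induction B using Finset.induction_on generalizing f x with
  | empty =>
    classical
    simp only [Finset.biUnion_empty, Finset.insert_empty, lmarginal_singleton,
      Finset.prod_empty, mul_one, Set.indicator_apply, mem_mpModelOn_singleton,
      Function.update_self, Function.update_of_ne hcr.ne', Pi.one_apply]
  | insert d B hdB ih =>
    set S := insert c (B.biUnion (G.branch · c))
    have hBc : B ⊆ (G.neighborFinset c).erase r := (Finset.subset_insert d B).trans hB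
    obtain ⟨hdr, hcd⟩ : d ≠ r ∧ G.Adj c d := by
      simpa using hB (Finset.mem_insert_self d B)
    have hdisj : Disjoint (G.branch d c) S := hG.disjoint_branch_insert_biUnion hcd
      (fun e he => (G.mem_neighborFinset _ _).1 (Finset.mem_of_mem_erase (hBc he))) hdB
    have hunion : insert c ((insert d B).biUnion (G.branch · c)) = S ∪ G.branch d c := by
      rw [Finset.biUnion_insert, Finset.insert_union, Finset.union_comm]
    have hmd := measurable_of_lmarginal_branch_eq hD hDij (hmsg d (Finset.mem_insert_self d B))
    have hφ : DependsOn (fun y : V → ℝ => f (y c) (y r)) (↑(G.branch d c))ᶜ := fun y y' h => by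
      have hrd : r ∉ G.branch d c := fun hr =>
        hG.notMem_branch hcr (hG.branch_subset_branch hcd hdr hr)
      show f (y c) (y r) = f (y' c) (y' r)
      rw [h c (hG.notMem_branch hcd.symm), h r hrd]
    have hglue : ∀ y : V → ℝ, (∫⋯∫⁻_(G.branch d c), fun y => f (y c) (y r) *
        (mpModelOn G D Dij (S ∪ G.branch d c)).indicator 1 y) y =
        f (y c) (y r) * m d c (y c) * (mpModelOn G D Dij S).indicator 1 y := fun y => by
      rw [lmarginal_mul_indicator_mpModelOn_union_branch hG hD hDij hsym hcd hdisj
        (Finset.mem_insert_self c _) hφ, hmsg d (Finset.mem_insert_self d B) y]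
      ring
    rw [hunion, lmarginal_union _ _ (measurable_mul_indicator_mpModelOn hD hDij hf c r _)
      hdisj.symm, funext hglue, ih hBc (fun e he => hmsg e (Finset.mem_insert_of_mem he))
      (f := fun a b => f a b * m d c a) (hf.mul (hmd.comp measurable_fst)) x]
    refine lintegral_congr fun t => ?_
    rw [Finset.prod_insert hdB]
    ring

theorem lmarginal_mpModelOn_branch (hG : G.IsAcyclic)
    (hD : ∀ i, MeasurableSet (D i)) (hDij : ∀ i j, MeasurableSet (Dij i j))
    (hsym : ∀ i j, ∀ p : ℝ × ℝ, p ∈ Dij i j ↔ p.swap ∈ Dij j i)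
    (hm : SatisfiesMessageRecursion G D Dij m) {c r : V} (hcr : G.Adj c r)
    {f : ℝ → ℝ → ℝ≥0∞} (hf : Measurable (Function.uncurry f)) (x : V → ℝ) :
    (∫⋯∫⁻_(G.branch c r), fun y => f (y c) (y r) *
      (mpModelOn G D Dij (G.branch c r)).indicator 1 y) x =
      ∫⁻ t, f t (x r) * (D c).indicator 1 t * ∏ d ∈ (G.neighborFinset c).erase r, m d c t := by
  induction hn : (G.branch c r).card using Nat.strong_induction_on generalizing c r f x with
  | _ n ih =>
  rw [hG.branch_eq_insert_biUnion hcr]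
  refine lmarginal_mpModelOn_insert_biUnion_branch hG hD hDij hsym hcr subset_rfl
    (fun d hd y => ?_) hf x
  obtain ⟨hdr, hcd⟩ : d ≠ r ∧ G.Adj c d := by simpa using hd
  rw [ih _ (hn ▸ hG.card_branch_lt hcd hdr) hcd.symm (f := fun a b => (Dij d c).indicator 1 (a, b))
    (measurable_const.indicator (hDij d c)) y rfl, hm d c hcd.symm]

theorem measurable_message (hG : G.IsAcyclic)
    (hD : ∀ i, MeasurableSet (D i)) (hDij : ∀ i j, MeasurableSet (Dij i j))
    (hsym : ∀ i j, ∀ p : ℝ × ℝ, p ∈ Dij i j ↔ p.swap ∈ Dij j i)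
    (hm : SatisfiesMessageRecursion G D Dij m) {c r : V} (hcr : G.Adj c r) :
    Measurable (m c r) :=
  measurable_of_lmarginal_branch_eq hD hDij fun y => by
    rw [lmarginal_mpModelOn_branch hG hD hDij hsym hm hcr
      (f := fun a b => (Dij c r).indicator 1 (a, b)) (measurable_const.indicator (hDij c r)) y,
      hm c r hcr]

theorem lintegral_indicator_mpModel_mul (hG : G.IsTree)
    (hD : ∀ i, MeasurableSet (D i)) (hDij : ∀ i j, MeasurableSet (Dij i j))
    (hsym : ∀ i j, ∀ p : ℝ × ℝ, p ∈ Dij i j ↔ p.swap ∈ Dij j i)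
    (hm : SatisfiesMessageRecursion G D Dij m) {i j : V} (hij : G.Adj i j)
    {f : ℝ → ℝ → ℝ≥0∞} (hf : Measurable (Function.uncurry f)) :
    ∫⁻ x, (mpModel G D Dij).indicator 1 x * f (x i) (x j) =
      ∫⁻ t, (∫⁻ s, f t s * (Dij i j).indicator 1 (t, s) * (D j).indicator 1 s *
          ∏ c ∈ (G.neighborFinset j).erase i, m c j s) *
        (D i).indicator 1 t * ∏ c ∈ (G.neighborFinset i).erase j, m c i t := by
  set g : ℝ → ℝ → ℝ≥0∞ := fun a b => f b a * (Dij i j).indicator 1 (b, a)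
  have hg : Measurable (Function.uncurry g) :=
    (hf.comp measurable_swap).mul ((measurable_const.indicator (hDij i j)).comp measurable_swap)
  have hmsg : Measurable fun t => ∫⁻ s, g s t * (D j).indicator 1 s *
      ∏ c ∈ (G.neighborFinset j).erase i, m c j s := by
    refine Measurable.lintegral_prod_right' (ν := volume) (f := fun p : ℝ × ℝ =>
      g p.2 p.1 * (D j).indicator 1 p.2 * ∏ c ∈ (G.neighborFinset j).erase i, m c j p.2) ?_
    refine ((hg.comp measurable_swap).mul
      ((measurable_const.indicator (hD j)).comp measurable_snd)).mul
      (Finset.measurable_prod _ fun c hc => (measurable_message hG.2 hD hDij hsym hm ?_).comp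
        measurable_snd)
    exact ((G.mem_neighborFinset _ _).1 (Finset.mem_of_mem_erase hc)).symm
  have hinner : ∀ y : V → ℝ, (∫⋯∫⁻_(G.branch j i), fun y =>
      (mpModelOn G D Dij (G.branch i j)).indicator 1 y *
        (g (y j) (y i) * (mpModelOn G D Dij (G.branch j i)).indicator 1 y)) y =
      (∫⁻ s, g s (y i) * (D j).indicator 1 s * ∏ c ∈ (G.neighborFinset j).erase i, m c j s) *
        (mpModelOn G D Dij (G.branch i j)).indicator 1 y := fun y => by
    rw [lmarginal_mul_of_dependsOn ((dependsOn_indicator_mpModelOn _).mono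
      fun v hv => Finset.disjoint_left.1 (hG.2.disjoint_branch hij) hv)
      (measurable_mul_indicator_mpModelOn hD hDij hg j i _) y,
      lmarginal_mpModelOn_branch hG.2 hD hDij hsym hm hij.symm hg y, mul_comm]
  have hF : Measurable fun y : V → ℝ => (mpModelOn G D Dij (G.branch i j)).indicator 1 y *
      (g (y j) (y i) * (mpModelOn G D Dij (G.branch j i)).indicator 1 y) :=
    (measurable_one.indicator (measurableSet_mpModelOn hD hDij _)).mul
      (measurable_mul_indicator_mpModelOn hD hDij hg j i _)
  calc ∫⁻ x, (mpModel G D Dij).indicator 1 x * f (x i) (x j)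
      = ∫⁻ x, (mpModelOn G D Dij (G.branch i j)).indicator 1 x *
          (g (x j) (x i) * (mpModelOn G D Dij (G.branch j i)).indicator 1 x) :=
        lintegral_congr fun x => by rw [indicator_mpModel_eq_branch_mul hG hsym hij x]; ring
    _ = _ := by
      rw [volume_pi, lintegral_eq_lmarginal_univ (fun _ => 0), ← hG.1.branch_union_branch i j,
        lmarginal_union _ _ hF (hG.2.disjoint_branch hij),
        funext hinner, lmarginal_mpModelOn_branch hG.2 hD hDij hsym hm hij
          (f := fun a _ => ∫⁻ s, g s a * (D j).indicator 1 s *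
            ∏ c ∈ (G.neighborFinset j).erase i, m c j s) (hmsg.comp measurable_fst)]

end MessagePassing

/-- Proposition 6, bivariate queries via message passing: let `{i,j}` be an
edge and `Q ⊆ ℝ × ℝ` a measurable query on `(x_i, x_j)`. With the updated message
`m*_{j→i}(t) = ∫ (∏_{c ∈ N(j)∖{i}} m_{c→j}(y)) · 1[(t,y) ∈ D_{ij} ∩ Q] · 1[y ∈ D_j] dy`,
the volume of `Δ ∩ {x : (x_i, x_j) ∈ Q}` equals
`∫ 1[t ∈ D_i] · m*_{j→i}(t) · ∏_{c ∈ N(i)∖{j}} m_{c→i}(t) dt`. -/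
theorem bivariate_query_message_passing {V : Type*} [Fintype V] [DecidableEq V]
    (G : SimpleGraph V) [DecidableRel G.Adj] (hG : G.IsTree)
    (D : V → Set ℝ) (hD : ∀ i, MeasurableSet (D i))
    (Dij : V → V → Set (ℝ × ℝ)) (hDij : ∀ i j, MeasurableSet (Dij i j))
    (hsym : ∀ i j, ∀ p : ℝ × ℝ, p ∈ Dij i j ↔ p.swap ∈ Dij j i)
    (m : V → V → ℝ → ℝ≥0∞)
    (hm : ∀ i j, G.Adj i j → ∀ t : ℝ,
      m i j t = ∫⁻ x : ℝ,
        (Dij i j).indicator (1 : ℝ × ℝ → ℝ≥0∞) (x, t) *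
          (D i).indicator (1 : ℝ → ℝ≥0∞) x *
          ∏ c ∈ (G.neighborFinset i).erase j, m c i x)
    (i j : V) (hij : G.Adj i j) (Q : Set (ℝ × ℝ)) (hQ : MeasurableSet Q) :
    volume (mpModel G D Dij ∩ {x : V → ℝ | (x i, x j) ∈ Q})
      = ∫⁻ t : ℝ,
          (D i).indicator (1 : ℝ → ℝ≥0∞) t *
            (∫⁻ y : ℝ,
              (∏ c ∈ (G.neighborFinset j).erase i, m c j y) *
                (Dij i j ∩ Q).indicator (1 : ℝ × ℝ → ℝ≥0∞) (t, y) *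
                (D j).indicator (1 : ℝ → ℝ≥0∞) y) *
            ∏ c ∈ (G.neighborFinset i).erase j, m c i t := by
  have hquery : MeasurableSet {x : V → ℝ | (x i, x j) ∈ Q} :=
    hQ.preimage ((measurable_pi_apply i).prodMk (measurable_pi_apply j))
  rw [← lintegral_indicator_one ((mpModelOn_univ (G := G) ▸
    measurableSet_mpModelOn hD hDij _).inter hquery)]
  calc ∫⁻ x, (mpModel G D Dij ∩ {x : V → ℝ | (x i, x j) ∈ Q}).indicator 1 x
      = ∫⁻ x, (mpModel G D Dij).indicator 1 x * Q.indicator 1 (x i, x j) :=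
        lintegral_congr fun x => by rw [Set.inter_indicator_one]; rfl
    _ = _ := lintegral_indicator_mpModel_mul hG hD hDij hsym hm hij
        (f := fun a b => Q.indicator 1 (a, b)) (measurable_const.indicator hQ)
    _ = _ := by simp only [Set.inter_indicator_one, Pi.mul_apply, mul_comm, mul_left_comm]
end
end

section
/- (Proposition 7: statistical moments via message passing.) Let i ∈ V be a vertex and let κ be a positive integer. Suppose the function x ↦ x_i^κ is Lebesgue-integrable over Δ and that 0 < volume(Δ) < ∞. Then ∫_Δ x_i^κ dx = ∫_ℝ 1[t ∈ D_i]·t^κ·b_i(t) dt; consequently, the κ-th moment of the coordinate X_i under the uniform probability distribution on Δ equals (1/volume(Δ)) · ∫_ℝ 1[t ∈ D_i]·t^κ·b_i(t) dt. -/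
open MeasureTheory
open scoped ENNReal

noncomputable section

/-!
Root the tree at `i`. Orienting every edge towards the root (possible by the symmetry of the
edge constraints), the indicator of `Δ` is `1[x_i ∈ D_i]` times one factor
`1[(x_u, x_{parent u}) ∈ D_{u, parent u}] · 1[x_u ∈ D_u]` per vertex `u ≠ i`. Integrating out
the coordinates below a child `c` of `v` only meets the factors of the subtree of `c`, so the
partial integrals over the subtrees of different children multiply, and by induction on the
subtree the one below `c` is the message `m_{c → v}(x_v)`. Hence the law of `x_i` under
Lebesgue measure on `Δ` has density `1[t ∈ D_i] · b_i(t)`. Its total mass is `volume Δ < ∞`,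
so the density is finite almost everywhere and the moment formula is a change of variables.
-/

section Marginal

variable {ι : Type*} [DecidableEq ι] {X : ι → Type*} [∀ i, MeasurableSpace (X i)]
  {μ : ∀ i, Measure (X i)}

theorem DependsOn.lmarginal {f : (∀ i, X i) → ℝ≥0∞} {A : Set ι} (hf : DependsOn f A)
    (s : Finset ι) : DependsOn (∫⋯∫⁻_s, f ∂μ) A := fun _ _ hxy =>
  lintegral_congr fun z => (hf.updateFinset z).mono Set.sdiff_subset hxy

theorem lmarginal_mul_left_of_dependsOn {f g : (∀ i, X i) → ℝ≥0∞} {s : Finset ι}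
    (hg : DependsOn g (↑s)ᶜ) (hf : Measurable f) :
    ∫⋯∫⁻_s, (fun x => g x * f x) ∂μ = fun x => g x * (∫⋯∫⁻_s, f ∂μ) x := by
  funext x
  have hgx : ∀ y, g (Function.updateFinset x s y) = g x := fun y =>
    hg fun i hi => by simp [Function.updateFinset, show i ∉ s from hi]
  simp only [lmarginal, hgx]
  exact lintegral_const_mul _ (hf.comp measurable_updateFinset)

theorem lmarginal_biUnion_prod [∀ i, SigmaFinite (μ i)] {κ : Type*} [DecidableEq κ]
    {C : Finset κ} {S : κ → Finset ι} {w : κ → (∀ i, X i) → ℝ≥0∞}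
    (hS : (C : Set κ).PairwiseDisjoint S) (hw : ∀ c ∈ C, Measurable (w c))
    (hdep : ∀ c ∈ C, DependsOn (w c) (↑(S c) ∪ (↑(C.biUnion S))ᶜ)) :
    ∫⋯∫⁻_(C.biUnion S), (fun x => ∏ c ∈ C, w c x) ∂μ =
      fun x => ∏ c ∈ C, (∫⋯∫⁻_(S c), w c ∂μ) x := by
  induction C using Finset.induction_on with
  | empty => simp
  | insert a C ha ih =>
    rw [Finset.coe_insert] at hS
    simp only [Finset.mem_insert, forall_eq_or_imp, Finset.biUnion_insert, Finset.coe_union]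
      at hw hdep
    have hSa : ∀ c ∈ C, Disjoint (S a) (S c) := fun c hc =>
      hS (Set.mem_insert a _) (Set.mem_insert_of_mem a hc) fun h => ha (h ▸ hc)
    have hdisj : Disjoint (S a) (C.biUnion S) := (Finset.disjoint_biUnion_right _ _ _).2 hSa
    have hwC : Measurable fun x => ∏ c ∈ C, w c x := Finset.measurable_prod _ hw.2
    have hwa : DependsOn (w a) (↑(C.biUnion S))ᶜ := hdep.1.mono <| Set.union_subset
      (fun i hi => Finset.disjoint_left.1 hdisj hi)
      (Set.compl_subset_compl.2 Set.subset_union_right)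
    have hmarg :
        DependsOn (fun x => ∏ c ∈ C, (∫⋯∫⁻_(S c), w c ∂μ) x) (↑(S a))ᶜ :=
      fun x y hxy => Finset.prod_congr rfl fun c hc => (((hdep.2 c hc).lmarginal (S c)).mono
        (Set.union_subset (fun i hi => Finset.disjoint_right.1 (hSa c hc) hi)
          (Set.compl_subset_compl.2 Set.subset_union_left))) hxy
    have ihC := ih (hS.subset (Set.subset_insert a _)) hw.2 fun c hc => (hdep.2 c hc).mono
      (Set.union_subset_union_right _ (Set.compl_subset_compl.2 Set.subset_union_right))
    -- integrate over the blocks of `C` first, where `w a` is a constant, then over `S a`,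
    -- where the result of the blocks of `C` is a constant
    rw [Finset.biUnion_insert]
    simp_rw [Finset.prod_insert ha]
    rw [lmarginal_union _ (fun x => w a x * ∏ c ∈ C, w c x) (hw.1.mul hwC) hdisj,
      lmarginal_mul_left_of_dependsOn hwa hwC, ihC]
    simp_rw [mul_comm (w a _)]
    rw [lmarginal_mul_left_of_dependsOn hmarg hw.1]
    simp_rw [mul_comm]

end Marginal

/-- A rooted tree on `V` given by parent pointers; `depth` witnesses that iterating `parent`
reaches `root`. -/
structure Rooting (V : Type*) where
  root : V
  parent : V → V
  depth : V → ℕ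
  parent_root : parent root = root
  depth_parent_lt : ∀ {u}, u ≠ root → depth (parent u) < depth u

namespace Rooting

section

variable {V : Type*} (T : Rooting V) {u v c : V}

lemma depth_parent_le (u : V) : T.depth (T.parent u) ≤ T.depth u := by
  by_cases hu : u = T.root
  · rw [hu, T.parent_root]
  · exact (T.depth_parent_lt hu).le

lemma depth_iterate_parent_le (k : ℕ) (u : V) : T.depth (T.parent^[k] u) ≤ T.depth u := by
  induction k generalizing u with
  | zero => rfl
  | succ k ih => exact (ih _).trans (T.depth_parent_le u)

lemma iterate_parent_eq_root {n : ℕ} (hu : T.depth u ≤ n) : T.parent^[n] u = T.root := by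
  induction n generalizing u with
  | zero =>
    by_contra h
    have := T.depth_parent_lt (u := u) h
    omega
  | succ n ih =>
    by_cases h : u = T.root
    · rw [h]; exact Function.iterate_fixed T.parent_root _
    · exact ih (by have := T.depth_parent_lt h; omega)

variable [Fintype V]

open Classical in
def subtree (v : V) : Finset V := {u | ∃ k, T.parent^[k] u = v}

lemma mem_subtree : u ∈ T.subtree v ↔ ∃ k, T.parent^[k] u = v := by simp [subtree]

lemma self_mem_subtree (v : V) : v ∈ T.subtree v := T.mem_subtree.2 ⟨0, rfl⟩

lemma subtree_root : T.subtree T.root = Finset.univ :=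
  Finset.eq_univ_of_forall fun _ => T.mem_subtree.2 ⟨_, T.iterate_parent_eq_root le_rfl⟩

lemma depth_le_of_mem_subtree (h : u ∈ T.subtree v) : T.depth v ≤ T.depth u := by
  obtain ⟨k, rfl⟩ := T.mem_subtree.1 h
  exact T.depth_iterate_parent_le k u

lemma mem_subtree_of_parent_mem (h : T.parent u ∈ T.subtree v) : u ∈ T.subtree v := by
  obtain ⟨k, hk⟩ := T.mem_subtree.1 h
  exact T.mem_subtree.2 ⟨k + 1, hk⟩

lemma parent_mem_subtree (h : u ∈ T.subtree v) (hne : u ≠ v) : T.parent u ∈ T.subtree v := by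
  obtain ⟨_ | k, hk⟩ := T.mem_subtree.1 h
  · exact absurd hk hne
  · exact T.mem_subtree.2 ⟨k, hk⟩

variable [DecidableEq V]

def children (v : V) : Finset V := {c | c ≠ T.root ∧ T.parent c = v}

lemma mem_children : c ∈ T.children v ↔ c ≠ T.root ∧ T.parent c = v := by simp [children]

lemma notMem_subtree_of_mem_children (hc : c ∈ T.children v) : v ∉ T.subtree c := by
  obtain ⟨hcr, rfl⟩ := T.mem_children.1 hc
  exact fun h => absurd (T.depth_le_of_mem_subtree h) (not_le.2 (T.depth_parent_lt hcr))

lemma parent_ne_of_mem_children (hc : c ∈ T.children v) : T.parent v ≠ c := by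
  rintro rfl
  exact T.notMem_subtree_of_mem_children hc (T.mem_subtree.2 ⟨1, rfl⟩)

lemma pairwiseDisjoint_subtree_children (v : V) :
    (T.children v : Set V).PairwiseDisjoint T.subtree := by
  intro c hc c' hc' hne
  refine Finset.disjoint_left.2 fun u hu hu' => ?_
  obtain ⟨k, hk⟩ := T.mem_subtree.1 hu
  obtain ⟨k', hk'⟩ := T.mem_subtree.1 hu'
  wlog hkk : k ≤ k' generalizing c c' k k'
  · exact this hc' hc (Ne.symm hne) hu' hu k' hk' k hk (le_of_not_ge hkk)
  have hcc' : c ∈ T.subtree c' := T.mem_subtree.2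
    ⟨k' - k, by rw [← hk, ← Function.iterate_add_apply, Nat.sub_add_cancel hkk, hk']⟩
  have hv : v ∈ T.subtree c' := (T.mem_children.1 hc).2 ▸ T.parent_mem_subtree hcc' hne
  exact T.notMem_subtree_of_mem_children hc' hv

def descendants (v : V) : Finset V := (T.subtree v).erase v

lemma insert_descendants (v : V) : insert v (T.descendants v) = T.subtree v :=
  Finset.insert_erase (T.self_mem_subtree v)

lemma descendants_root : T.descendants T.root = Finset.univ.erase T.root := by
  rw [descendants, subtree_root]

lemma mem_descendants : u ∈ T.descendants v ↔ ∃ c ∈ T.children v, u ∈ T.subtree c := by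
  constructor
  · intro h
    obtain ⟨hne, hu⟩ := Finset.mem_erase.1 h
    obtain ⟨k, hk⟩ := T.mem_subtree.1 hu
    induction k generalizing u with
    | zero => exact absurd hk hne
    | succ k ih =>
      by_cases hp : T.parent u = v
      · refine ⟨u, T.mem_children.2 ⟨?_, hp⟩, T.self_mem_subtree u⟩
        rintro rfl
        exact hne (T.parent_root ▸ hp)
      · obtain ⟨c, hc, hpc⟩ := ih (Finset.mem_erase.2 ⟨hp, T.mem_subtree.2 ⟨k, hk⟩⟩) hp
          (T.mem_subtree.2 ⟨k, hk⟩) hk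
        exact ⟨c, hc, T.mem_subtree_of_parent_mem hpc⟩
  · rintro ⟨c, hc, hu⟩
    obtain ⟨k, hk⟩ := T.mem_subtree.1 hu
    refine Finset.mem_erase.2 ⟨?_, T.mem_subtree.2 ⟨k + 1, ?_⟩⟩
    · rintro rfl
      exact T.notMem_subtree_of_mem_children hc hu
    · rw [Function.iterate_succ_apply', hk, (T.mem_children.1 hc).2]

lemma descendants_eq_biUnion (v : V) : T.descendants v = (T.children v).biUnion T.subtree := by
  ext u
  simp [T.mem_descendants]

lemma card_descendants_lt (hc : c ∈ T.children v) :
    (T.descendants c).card < (T.descendants v).card :=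
  calc (T.descendants c).card < (T.subtree c).card :=
        Finset.card_erase_lt_of_mem (T.self_mem_subtree c)
    _ ≤ (T.descendants v).card :=
        Finset.card_le_card (T.descendants_eq_biUnion v ▸ Finset.subset_biUnion_of_mem _ hc)

end

variable {V X : Type*} (T : Rooting V) {c v : V}

def weight (ψ : V → X × X → ℝ≥0∞) (s : Finset V) (x : V → X) : ℝ≥0∞ :=
  ∏ u ∈ s, ψ u (x u, x (T.parent u))

lemma measurable_weight [MeasurableSpace X] {ψ : V → X × X → ℝ≥0∞}
    (hψ : ∀ u, Measurable (ψ u)) (s : Finset V) : Measurable (T.weight ψ s) :=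
  Finset.measurable_prod _ fun u _ =>
    (hψ u).comp ((measurable_pi_apply u).prodMk (measurable_pi_apply (T.parent u)))

lemma dependsOn_weight (ψ : V → X × X → ℝ≥0∞) {s : Finset V} {A : Set V}
    (hA : ∀ u ∈ s, u ∈ A ∧ T.parent u ∈ A) : DependsOn (T.weight ψ s) A := fun x y hxy =>
  Finset.prod_congr rfl fun u hu => by rw [hxy u (hA u hu).1, hxy _ (hA u hu).2]

lemma weight_insert [DecidableEq V] (ψ : V → X × X → ℝ≥0∞) {s : Finset V} {u : V}
    (hu : u ∉ s) :
    T.weight ψ (insert u s) = fun x => ψ u (x u, x (T.parent u)) * T.weight ψ s x :=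
  funext fun _ => Finset.prod_insert hu

variable [Fintype V] [DecidableEq V]

lemma dependsOn_weight_subtree (ψ : V → X × X → ℝ≥0∞) (hc : c ∈ T.children v) :
    DependsOn (T.weight ψ (T.subtree c)) (↑(T.subtree c) ∪ (↑(T.descendants v))ᶜ) := by
  refine T.dependsOn_weight ψ fun u hu => ⟨Or.inl hu, ?_⟩
  by_cases huc : u = c
  · subst huc
    rw [(T.mem_children.1 hc).2]
    exact Or.inr (Finset.notMem_erase v _)
  · exact Or.inl (T.parent_mem_subtree hu huc)

/-- `μ v` plays the role of the message from `v` to its parent. -/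
def IsMessageFamily [MeasurableSpace X] (ν : Measure X) (ψ : V → X × X → ℝ≥0∞)
    (μ : V → X → ℝ≥0∞) : Prop :=
  ∀ v ≠ T.root, ∀ t, μ v t = ∫⁻ s, ψ v (s, t) * ∏ c ∈ T.children v, μ c s ∂ν

variable [MeasurableSpace X] {ν : Measure X} [SigmaFinite ν] {ψ : V → X × X → ℝ≥0∞}
  {μ : V → X → ℝ≥0∞}

theorem lmarginal_weight_descendants (hψ : ∀ u, Measurable (ψ u))
    (hμ : T.IsMessageFamily ν ψ μ)
    (v : V) :
    ∫⋯∫⁻_(T.descendants v), T.weight ψ (T.descendants v) ∂(fun _ => ν) =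
      fun x => ∏ c ∈ T.children v, μ c (x v) := by
  have hsplit : T.weight ψ (T.descendants v) =
      fun x => ∏ c ∈ T.children v, T.weight ψ (T.subtree c) x := funext fun x => by
    rw [weight, T.descendants_eq_biUnion,
      Finset.prod_biUnion (T.pairwiseDisjoint_subtree_children v)]
    rfl
  rw [hsplit, T.descendants_eq_biUnion,
    lmarginal_biUnion_prod (T.pairwiseDisjoint_subtree_children v)
      (fun c _ => T.measurable_weight hψ _)
      fun c hc => T.descendants_eq_biUnion v ▸ T.dependsOn_weight_subtree ψ hc]
  funext x
  refine Finset.prod_congr rfl fun c hc => ?_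
  obtain ⟨hcr, hcv⟩ := T.mem_children.1 hc
  have hc_desc : c ∉ T.descendants c := Finset.notMem_erase c _
  have hv_desc : v ∉ T.descendants c := fun h =>
    T.notMem_subtree_of_mem_children hc (Finset.mem_of_mem_erase h)
  have hedge :
      DependsOn (fun y : V → X => ψ c (y c, y (T.parent c))) (↑(T.descendants c))ᶜ :=
    fun y z h => by dsimp only; rw [h c hc_desc, hcv, h v hv_desc]
  rw [← T.insert_descendants c, lmarginal_insert _ (T.measurable_weight hψ _) hc_desc,
    T.weight_insert ψ hc_desc, lmarginal_mul_left_of_dependsOn hedge (T.measurable_weight hψ _),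
    lmarginal_weight_descendants hψ hμ c, hμ c hcr]
  have hvc : v ≠ c := fun h => T.notMem_subtree_of_mem_children hc (h ▸ T.self_mem_subtree v)
  simp only [hcv, Function.update_self, Function.update_of_ne hvc]
termination_by (T.descendants v).card
decreasing_by exact T.card_descendants_lt hc

theorem lintegral_comp_root_mul_weight [Nonempty X] (hψ : ∀ u, Measurable (ψ u))
    (hμ : T.IsMessageFamily ν ψ μ)
    {φ : X → ℝ≥0∞} (hφ : Measurable φ) :
    ∫⁻ x, φ (x T.root) * T.weight ψ (Finset.univ.erase T.root) x ∂Measure.pi (fun _ => ν) =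
      ∫⁻ t, φ t * ∏ c ∈ T.children T.root, μ c t ∂ν := by
  have hr : T.root ∉ T.descendants T.root := Finset.notMem_erase _ _
  have hφr : DependsOn (fun x : V → X => φ (x T.root)) (↑(T.descendants T.root))ᶜ :=
    fun x y h => congrArg φ (h _ hr)
  rw [← T.descendants_root, lintegral_eq_lmarginal_univ (fun _ => Classical.arbitrary X),
    ← T.subtree_root, ← T.insert_descendants,
    lmarginal_insert (fun x => φ (x T.root) * T.weight ψ (T.descendants T.root) x)
      ((hφ.comp (measurable_pi_apply _)).mul (T.measurable_weight hψ _)) hr,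
    lmarginal_mul_left_of_dependsOn hφr (T.measurable_weight hψ _),
    T.lmarginal_weight_descendants hψ hμ]
  simp only [Function.update_self]

theorem measurable_message (hψ : ∀ u, Measurable (ψ u))
    (hμ : T.IsMessageFamily ν ψ μ)
    {v : V} (hv : v ≠ T.root) : Measurable (μ v) := by
  rw [show μ v = fun t => ∫⁻ s, ψ v (s, t) * ∏ c ∈ T.children v, μ c s ∂ν from
    funext (hμ v hv)]
  exact Measurable.lintegral_prod_left' ((hψ v).mul (Finset.measurable_prod _ fun c hc =>
    (measurable_message hψ hμ (T.mem_children.1 hc).1).comp measurable_fst))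
termination_by (T.descendants v).card
decreasing_by exact T.card_descendants_lt hc

end Rooting

namespace SimpleGraph.IsTree

variable {V : Type*} {G : SimpleGraph V} (hG : G.IsTree) (r : V)

def pathTo (u : V) : G.Walk u r := (hG.existsUnique_path u r).choose

lemma isPath_pathTo (u : V) : (hG.pathTo r u).IsPath :=
  (hG.existsUnique_path u r).choose_spec.1

lemma eq_pathTo {u : V} {p : G.Walk u r} (hp : p.IsPath) : p = hG.pathTo r u :=
  (hG.existsUnique_path u r).choose_spec.2 p hp

def rootedAt : Rooting V where
  root := r
  parent u := (hG.pathTo r u).snd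
  depth u := (hG.pathTo r u).length
  parent_root := by rw [← hG.eq_pathTo r Walk.IsPath.nil]; rfl
  depth_parent_lt {u} hu := by
    rw [← hG.eq_pathTo r (hG.isPath_pathTo r u).tail,
      ← Walk.length_tail_add_one (Walk.not_nil_of_ne hu)]
    omega

lemma adj_iff_rootedAt {u v : V} : G.Adj u v ↔
    (u ≠ r ∧ (hG.rootedAt r).parent u = v) ∨ (v ≠ r ∧ (hG.rootedAt r).parent v = u) := by
  constructor
  · intro h
    by_cases hv : v ∈ (hG.pathTo r u).support
    · have hvu : v = (hG.rootedAt r).parent u :=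
        hG.isAcyclic.eq_snd_of_adj_start (hG.isPath_pathTo r u) h hv
      refine Or.inl ⟨?_, hvu.symm⟩
      rintro rfl
      exact h.ne (hvu.trans (hG.rootedAt u).parent_root).symm
    · have hp := hG.eq_pathTo r ((hG.isPath_pathTo r u).cons hv (h := h.symm))
      refine Or.inr ⟨fun hvr => hv (hvr ▸ Walk.end_mem_support _), ?_⟩
      change (hG.pathTo r v).snd = u
      rw [← hp, Walk.snd_cons]
  · rintro (⟨hu, rfl⟩ | ⟨hv, rfl⟩)
    · exact Walk.adj_snd (Walk.not_nil_of_ne hu)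
    · exact (Walk.adj_snd (Walk.not_nil_of_ne hv)).symm

lemma children_rootedAt [Fintype V] [DecidableEq V] [DecidableRel G.Adj] (v : V) :
    (hG.rootedAt r).children v = (G.neighborFinset v).erase ((hG.rootedAt r).parent v) := by
  ext c
  rw [Rooting.mem_children, Finset.mem_erase, mem_neighborFinset, hG.adj_iff_rootedAt r]
  constructor
  · intro h
    exact ⟨((hG.rootedAt r).parent_ne_of_mem_children ((hG.rootedAt r).mem_children.2 h)).symm,
      Or.inr h⟩
  · rintro ⟨hne, ⟨-, h⟩ | h⟩
    · exact absurd h.symm hne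
    · exact h

end SimpleGraph.IsTree

section MessagePassing

variable {V : Type*} {G : SimpleGraph V} {D : V → Set ℝ} {Dij : V → V → Set (ℝ × ℝ)}

lemma measurableSet_mpModel [Countable V] (hD : ∀ i, MeasurableSet (D i))
    (hDij : ∀ i j, MeasurableSet (Dij i j)) : MeasurableSet (mpModel G D Dij) := by
  simp only [mpModel, Set.ofPred_and, Set.ofPred_forall]
  exact (MeasurableSet.iInter fun i => measurable_pi_apply i (hD i)).inter
    (.iInter fun i => .iInter fun j => .iInter fun _ =>
      ((measurable_pi_apply i).prodMk (measurable_pi_apply j)) (hDij i j))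

/-- The factor of the indicator of `Δ` carried by the edge from `u` to its parent, and the
kernel of the recursion for `m u (parent u)`. -/
def mpPotential (T : Rooting V) (D : V → Set ℝ) (Dij : V → V → Set (ℝ × ℝ)) (u : V)
    (p : ℝ × ℝ) : ℝ≥0∞ :=
  (Dij u (T.parent u)).indicator 1 p * (D u).indicator 1 p.1

lemma measurable_mpPotential (hD : ∀ i, MeasurableSet (D i))
    (hDij : ∀ i j, MeasurableSet (Dij i j)) (T : Rooting V) (u : V) :
    Measurable (mpPotential T D Dij u) :=
  (measurable_one.indicator (hDij _ _)).mul
    ((measurable_one.indicator (hD u)).comp measurable_fst)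

variable [Fintype V] [DecidableEq V]

lemma mem_mpModel_iff (hG : G.IsTree) (r : V)
    (hsym : ∀ i j, ∀ p : ℝ × ℝ, p ∈ Dij i j ↔ p.swap ∈ Dij j i)
    (x : V → ℝ) : x ∈ mpModel G D Dij ↔ x r ∈ D r ∧ ∀ u ∈ Finset.univ.erase r,
      (x u, x ((hG.rootedAt r).parent u)) ∈ Dij u ((hG.rootedAt r).parent u) ∧ x u ∈ D u := by
  have hparent : ∀ {u}, u ∈ Finset.univ.erase r → G.Adj u ((hG.rootedAt r).parent u) :=
    fun hu => (hG.adj_iff_rootedAt r).2 (Or.inl ⟨(Finset.mem_erase.1 hu).1, rfl⟩)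
  have herase : ∀ {u}, u ≠ r → u ∈ Finset.univ.erase r := fun hu =>
    Finset.mem_erase.2 ⟨hu, Finset.mem_univ _⟩
  constructor
  · rintro ⟨hD, hE⟩
    exact ⟨hD r, fun u hu => ⟨hE _ _ (hparent hu), hD u⟩⟩
  · rintro ⟨hr, h⟩
    refine ⟨fun u => ?_, fun u v huv => ?_⟩
    · by_cases hu : u = r
      · exact hu ▸ hr
      · exact (h u (herase hu)).2
    · rcases (hG.adj_iff_rootedAt r).1 huv with ⟨hu, rfl⟩ | ⟨hv, rfl⟩
      · exact (h u (herase hu)).1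
      · exact (hsym _ _ _).2 (h v (herase hv)).1

lemma indicator_mpModel (hG : G.IsTree) (r : V)
    (hsym : ∀ i j, ∀ p : ℝ × ℝ, p ∈ Dij i j ↔ p.swap ∈ Dij j i)
    (x : V → ℝ) : (mpModel G D Dij).indicator 1 x = (D r).indicator 1 (x r) *
      (hG.rootedAt r).weight (mpPotential (hG.rootedAt r) D Dij) (Finset.univ.erase r) x := by
  classical
  simp only [Rooting.weight, mpPotential, Set.indicator_apply, Pi.one_apply, boole_mul,
    Finset.prod_boole, ← ite_and, mem_mpModel_iff hG r hsym]
  congr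

variable [DecidableRel G.Adj]

def IsMPMessages (G : SimpleGraph V) [DecidableRel G.Adj] (D : V → Set ℝ)
    (Dij : V → V → Set (ℝ × ℝ)) (m : V → V → ℝ → ℝ≥0∞) : Prop :=
  ∀ i j, G.Adj i j → ∀ t : ℝ,
    m i j t = ∫⁻ x : ℝ,
      (Dij i j).indicator (1 : ℝ × ℝ → ℝ≥0∞) (x, t) *
        (D i).indicator (1 : ℝ → ℝ≥0∞) x * ∏ c ∈ (G.neighborFinset i).erase j, m c i x

def mpBelief (G : SimpleGraph V) [DecidableRel G.Adj] (m : V → V → ℝ → ℝ≥0∞) (r : V)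
    (t : ℝ) : ℝ≥0∞ :=
  ∏ c ∈ G.neighborFinset r, m c r t

variable {m : V → V → ℝ → ℝ≥0∞}

lemma message_rootedAt (hG : G.IsTree) (r : V) (hm : IsMPMessages G D Dij m) :
    (hG.rootedAt r).IsMessageFamily volume (mpPotential (hG.rootedAt r) D Dij)
      fun v => m v ((hG.rootedAt r).parent v) := by
  intro v hv t
  dsimp only
  rw [hm v _ ((hG.adj_iff_rootedAt r).2 (Or.inl ⟨hv, rfl⟩)) t, ← hG.children_rootedAt r]
  refine lintegral_congr fun s => ?_
  congr 1
  exact Finset.prod_congr rfl fun c hc => by rw [((hG.rootedAt r).mem_children.1 hc).2]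

theorem lintegral_mpModel_comp_eval (hG : G.IsTree) (r : V) (hD : ∀ i, MeasurableSet (D i))
    (hDij : ∀ i j, MeasurableSet (Dij i j))
    (hsym : ∀ i j, ∀ p : ℝ × ℝ, p ∈ Dij i j ↔ p.swap ∈ Dij j i)
    (hm : IsMPMessages G D Dij m)
    {f : ℝ → ℝ≥0∞} (hf : Measurable f) :
    ∫⁻ x in mpModel G D Dij, f (x r) =
      ∫⁻ t, f t * ((D r).indicator 1 t * mpBelief G m r t) := by
  have hchildren : (hG.rootedAt r).children r = G.neighborFinset r := by
    rw [hG.children_rootedAt r,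
      show (hG.rootedAt r).parent r = r from (hG.rootedAt r).parent_root]
    exact Finset.erase_eq_of_notMem (G.notMem_neighborFinset_self r)
  calc ∫⁻ x in mpModel G D Dij, f (x r)
      = ∫⁻ x, f (x r) * (mpModel G D Dij).indicator 1 x := by
        rw [← lintegral_indicator (measurableSet_mpModel hD hDij)]
        classical
        simp [Set.indicator_apply]
    _ = ∫⁻ x, (f (x r) * (D r).indicator 1 (x r)) *
          (hG.rootedAt r).weight (mpPotential (hG.rootedAt r) D Dij) (Finset.univ.erase r) x
          ∂Measure.pi fun _ => volume := by
        simp_rw [← volume_pi, indicator_mpModel hG r hsym, mul_assoc]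
    _ = ∫⁻ t, (f t * (D r).indicator 1 t) *
          ∏ c ∈ (hG.rootedAt r).children r, m c ((hG.rootedAt r).parent c) t :=
        (hG.rootedAt r).lintegral_comp_root_mul_weight (measurable_mpPotential hD hDij _)
          (message_rootedAt hG r hm) (hf.mul (measurable_one.indicator (hD r)))
    _ = _ := by
        refine lintegral_congr fun t => ?_
        rw [mul_assoc, mpBelief, ← hchildren]
        congr 2
        exact Finset.prod_congr rfl fun c hc => by rw [((hG.rootedAt r).mem_children.1 hc).2]

lemma measurable_indicator_mul_mpBelief (hG : G.IsTree) (r : V) (hD : ∀ i, MeasurableSet (D i))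
    (hDij : ∀ i j, MeasurableSet (Dij i j))
    (hm : IsMPMessages G D Dij m) :
    Measurable fun t => (D r).indicator 1 t * mpBelief G m r t := by
  refine (measurable_one.indicator (hD r)).mul (Finset.measurable_prod _ fun c hc => ?_ :
    Measurable fun t => ∏ c ∈ G.neighborFinset r, m c r t)
  obtain ⟨hrr, -⟩ | ⟨hcr, hcp⟩ :=
    (hG.adj_iff_rootedAt r).1 ((G.mem_neighborFinset r c).1 hc)
  · exact absurd rfl hrr
  · exact hcp ▸ (hG.rootedAt r).measurable_message (measurable_mpPotential hD hDij _)
      (message_rootedAt hG r hm) hcr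

theorem map_eval_restrict_mpModel (hG : G.IsTree) (r : V) (hD : ∀ i, MeasurableSet (D i))
    (hDij : ∀ i j, MeasurableSet (Dij i j))
    (hsym : ∀ i j, ∀ p : ℝ × ℝ, p ∈ Dij i j ↔ p.swap ∈ Dij j i)
    (hm : IsMPMessages G D Dij m) :
    (volume.restrict (mpModel G D Dij)).map (fun x => x r) =
      volume.withDensity fun t => (D r).indicator 1 t * mpBelief G m r t := by
  ext s hs
  rw [Measure.map_apply (measurable_pi_apply r) hs,
    ← lintegral_indicator_one (measurable_pi_apply r hs), withDensity_apply _ hs,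
    ← lintegral_indicator hs]
  refine (lintegral_mpModel_comp_eval hG r hD hDij hsym hm (measurable_one.indicator hs)).trans
    (lintegral_congr fun t => ?_)
  classical
  simp only [Set.indicator_apply, Pi.one_apply]
  split_ifs <;> simp

theorem integral_mpModel_comp_eval (hG : G.IsTree) (r : V) (hD : ∀ i, MeasurableSet (D i))
    (hDij : ∀ i j, MeasurableSet (Dij i j))
    (hsym : ∀ i j, ∀ p : ℝ × ℝ, p ∈ Dij i j ↔ p.swap ∈ Dij j i)
    (hm : IsMPMessages G D Dij m)
    (hfin : volume (mpModel G D Dij) < ⊤) {g : ℝ → ℝ} (hg : Measurable g) :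
    ∫ x in mpModel G D Dij, g (x r) =
      ∫ t, (D r).indicator (fun u => g u * (mpBelief G m r u).toReal) t := by
  have hmap := map_eval_restrict_mpModel hG r hD hDij hsym hm
  have hρ := measurable_indicator_mul_mpBelief hG r hD hDij hm
  have hmass : ∫⁻ t, (D r).indicator 1 t * mpBelief G m r t =
      volume (mpModel G D Dij) := by
    rw [← setLIntegral_univ, ← withDensity_apply _ MeasurableSet.univ, ← hmap,
      Measure.map_apply (measurable_pi_apply r) MeasurableSet.univ, Set.preimage_univ,
      Measure.restrict_apply_univ]
  rw [← integral_map (measurable_pi_apply r).aemeasurable hg.aestronglyMeasurable, hmap,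
    integral_withDensity_eq_integral_toReal_smul hρ (ae_lt_top hρ (hmass ▸ hfin.ne))]
  refine integral_congr_ae (Filter.Eventually.of_forall fun t => ?_)
  by_cases ht : t ∈ D r <;> simp [ht, mul_comm]

end MessagePassing

theorem moments_message_passing_general {V : Type*} [Fintype V] [DecidableEq V]
    (G : SimpleGraph V) [DecidableRel G.Adj] (hG : G.IsTree)
    (D : V → Set ℝ) (hD : ∀ i, MeasurableSet (D i))
    (Dij : V → V → Set (ℝ × ℝ)) (hDij : ∀ i j, MeasurableSet (Dij i j))
    (hsym : ∀ i j, ∀ p : ℝ × ℝ, p ∈ Dij i j ↔ p.swap ∈ Dij j i)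
    (m : V → V → ℝ → ℝ≥0∞)
    (hm : ∀ i j, G.Adj i j → ∀ t : ℝ,
      m i j t = ∫⁻ x : ℝ,
        (Dij i j).indicator (1 : ℝ × ℝ → ℝ≥0∞) (x, t) *
          (D i).indicator (1 : ℝ → ℝ≥0∞) x *
          ∏ c ∈ (G.neighborFinset i).erase j, m c i x)
    (i : V) (κ : ℕ)
    (hfin : volume (mpModel G D Dij) < ⊤) :
    ((∫ x in mpModel G D Dij, (x i) ^ κ)
      = ∫ t : ℝ,
          (D i).indicator
            (fun u => u ^ κ * (∏ c ∈ G.neighborFinset i, m c i u).toReal) t) ∧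
    ((∫ x, (x i) ^ κ
        ∂((volume (mpModel G D Dij))⁻¹ • volume.restrict (mpModel G D Dij)))
      = (volume (mpModel G D Dij)).toReal⁻¹ *
          ∫ t : ℝ,
            (D i).indicator
              (fun u => u ^ κ * (∏ c ∈ G.neighborFinset i, m c i u).toReal) t) := by
  have hmoment := integral_mpModel_comp_eval hG i hD hDij hsym hm hfin (g := fun t => t ^ κ)
    (measurable_id.pow_const κ)
  exact ⟨hmoment, by rw [integral_smul_measure, smul_eq_mul, ENNReal.toReal_inv, hmoment]; rfl⟩

/-- Proposition 7, statistical moments via message passing: let `i` be a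
vertex and `κ` a positive integer. If `x ↦ x_i^κ` is Lebesgue-integrable over `Δ` and
`0 < volume Δ < ∞`, then `∫_Δ x_i^κ dx = ∫ 1[t ∈ D_i] · t^κ · b_i(t) dt` ; consequently the
`κ`-th moment of the coordinate `X_i` under the uniform probability distribution on `Δ`
(the normalized restriction of Lebesgue measure to `Δ`) equals
`(1/volume Δ) · ∫ 1[t ∈ D_i] · t^κ · b_i(t) dt`. -/
theorem moments_message_passing {V : Type*} [Fintype V] [DecidableEq V]
    (G : SimpleGraph V) [DecidableRel G.Adj] (hG : G.IsTree)
    (D : V → Set ℝ) (hD : ∀ i, MeasurableSet (D i))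
    (Dij : V → V → Set (ℝ × ℝ)) (hDij : ∀ i j, MeasurableSet (Dij i j))
    (hsym : ∀ i j, ∀ p : ℝ × ℝ, p ∈ Dij i j ↔ p.swap ∈ Dij j i)
    (m : V → V → ℝ → ℝ≥0∞)
    (hm : ∀ i j, G.Adj i j → ∀ t : ℝ,
      m i j t = ∫⁻ x : ℝ,
        (Dij i j).indicator (1 : ℝ × ℝ → ℝ≥0∞) (x, t) *
          (D i).indicator (1 : ℝ → ℝ≥0∞) x *
          ∏ c ∈ (G.neighborFinset i).erase j, m c i x)
    (i : V) (κ : ℕ) (hκ : 0 < κ)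
    (hInt : IntegrableOn (fun x : V → ℝ => (x i) ^ κ) (mpModel G D Dij))
    (hpos : 0 < volume (mpModel G D Dij)) (hfin : volume (mpModel G D Dij) < ⊤) :
    ((∫ x in mpModel G D Dij, (x i) ^ κ)
      = ∫ t : ℝ,
          (D i).indicator
            (fun u => u ^ κ * (∏ c ∈ G.neighborFinset i, m c i u).toReal) t) ∧
    ((∫ x, (x i) ^ κ
        ∂((volume (mpModel G D Dij))⁻¹ • volume.restrict (mpModel G D Dij)))
      = (volume (mpModel G D Dij)).toReal⁻¹ *
          ∫ t : ℝ,
            (D i).indicator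
              (fun u => u ^ κ * (∏ c ∈ G.neighborFinset i, m c i u).toReal) t) :=
  moments_message_passing_general G hG D hD Dij hDij hsym m hm i κ hfin
end
end
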